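/- arXiv:0712.2172 — 5 statements merged into one kernel-verified Lean document; each statement's English description precedes it below -/
import Mathlib

section
/- For every f ∈ 𝓛(F) and α ∈ F^×, the function x ↦ f(αx) belongs to 𝓛(F) and ∫^F f(αx) dx = |η(α)|^{−1}·X^{−ν(α)}·∫^F f(x) dx. -/
noncomputable section

open MeasureTheory

/-- A field `F` with a split valuation `ν : F^× → Γ` (split by `t`), with residue field `k`,
residue map `ρ : O_F → k`, where `Γ` has a minimal positive element `one`. -/
structure LiftSetup (Γ F k : Type*) [AddCommGroup Γ] [LinearOrder Γ] [IsOrderedAddMonoid Γ] [Field F] [Field k] where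
  /-- the valuation (recorded on nonzero elements) -/
  ν : F → Γ
  /-- the splitting homomorphism `t : Γ → F^×` -/
  t : Γ → F
  /-- the residue map (recorded on the valuation ring) -/
  ρ : F → k
  /-- the minimal positive element of `Γ` -/
  one : Γ
  one_pos : 0 < one
  one_min : ∀ γ : Γ, 0 < γ → one ≤ γ
  ν_mul : ∀ x y : F, x ≠ 0 → y ≠ 0 → ν (x * y) = ν x + ν y
  ν_add : ∀ x y : F, x ≠ 0 → y ≠ 0 → x + y ≠ 0 → min (ν x) (ν y) ≤ ν (x + y)
  t_ne : ∀ γ : Γ, t γ ≠ 0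
  t_add : ∀ γ δ : Γ, t (γ + δ) = t γ * t δ
  ν_t : ∀ γ : Γ, ν (t γ) = γ
  ρ_add : ∀ x y : F, (x = 0 ∨ 0 ≤ ν x) → (y = 0 ∨ 0 ≤ ν y) → ρ (x + y) = ρ x + ρ y
  ρ_mul : ∀ x y : F, (x = 0 ∨ 0 ≤ ν x) → (y = 0 ∨ 0 ≤ ν y) → ρ (x * y) = ρ x * ρ y
  ρ_one : ρ 1 = 1
  ρ_surj : ∀ u : k, ∃ x : F, (x = 0 ∨ 0 ≤ ν x) ∧ ρ x = u
  ρ_eq_zero : ∀ x : F, (x = 0 ∨ 0 ≤ ν x) → (ρ x = 0 ↔ (x = 0 ∨ 0 < ν x))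

namespace LiftSetup

variable {Γ F k : Type*} [AddCommGroup Γ] [LinearOrder Γ] [IsOrderedAddMonoid Γ] [Field F] [Field k]
variable (S : LiftSetup Γ F k)

/-- The ring of integers `O_F` of the valuation. -/
def integers : Set F := {x | x = 0 ∨ 0 ≤ S.ν x}

/-- The translated fractional ideal `a + t(γ)O_F`. -/
def fracIdeal (a : F) (γ : Γ) : Set F := {x | (x - a) * S.t (-γ) ∈ S.integers}

/-- The lift `f^{a,γ}` of a function `f` on the residue field `k`:
`f^{a,γ}(x) = f(ρ((x-a)t(-γ)))` for `x ∈ a + t(γ)O_F` and `0` otherwise. -/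
def lift {A : Type*} [Zero A] (f : k → A) (a : F) (γ : Γ) : F → A :=
  (S.fracIdeal a γ).indicator fun x => f (S.ρ ((x - a) * S.t (-γ)))

/-- The homomorphism `η : F^× → k^×`, `x ↦ ρ(x t(-ν x))`. -/
def η (x : F) : k := S.ρ (x * S.t (-S.ν x))

end LiftSetup

section CGamma

variable (Γ : Type*) [AddCommGroup Γ] [LinearOrder Γ] [IsOrderedAddMonoid Γ]

instance : IsDomain (AddMonoidAlgebra ℂ Γ) := NoZeroDivisors.to_isDomain _

/-- `ℂ(Γ)`: the field of fractions of the complex group algebra of `Γ`. -/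
abbrev CGamma : Type _ := FractionRing (AddMonoidAlgebra ℂ Γ)

/-- The canonical embedding `ℂ → ℂ(Γ)`. -/
def embC : ℂ →+* CGamma Γ :=
  (algebraMap (AddMonoidAlgebra ℂ Γ) (CGamma Γ)).comp AddMonoidAlgebra.singleZeroRingHom

variable {Γ}

/-- The basis element `X^γ` of `ℂ(Γ)`. -/
def Xp (γ : Γ) : CGamma Γ :=
  algebraMap (AddMonoidAlgebra ℂ Γ) (CGamma Γ) (AddMonoidAlgebra.single γ 1)

end CGamma

section LFmu

variable {Γ F k : Type*} [AddCommGroup Γ] [LinearOrder Γ] [IsOrderedAddMonoid Γ] [Field F] [Field k]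
  [MeasurableSpace k]

open MeasureTheory

/-- `𝓛(F)`: the `ℂ(Γ)`-span of the lifts of Haar-integrable functions on `k`. -/
def LFmu (S : LiftSetup Γ F k) (μ : Measure k) : Submodule (CGamma Γ) (F → CGamma Γ) :=
  Submodule.span (CGamma Γ)
    {g | ∃ f : k → ℂ, Integrable f μ ∧ ∃ (a : F) (γ : Γ),
        g = S.lift (fun u => embC Γ (f u)) a γ}

theorem liftC_mem_mu (S : LiftSetup Γ F k) (μ : Measure k)
    {f : k → ℂ} (hf : Integrable f μ) (a : F) (γ : Γ) :
    S.lift (fun u => embC Γ (f u)) a γ ∈ LFmu S μ :=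
  Submodule.subset_span ⟨f, hf, a, γ, rfl⟩

/-- `𝓛^γ`: the complex span of the lifts of Haar-integrable functions at height `γ`. -/
def Lheight (S : LiftSetup Γ F k) (μ : Measure k) (γ : Γ) : Submodule ℂ (F → ℂ) :=
  Submodule.span ℂ {g | ∃ f : k → ℂ, Integrable f μ ∧ ∃ a : F, g = S.lift f a γ}

end LFmu

/-!
Write `α = t(ν α) · u` with `u` a unit of `O_F`, so that `ρ u = η α`. Substituting `x ↦ α x`
turns the lift `f^{a,γ}` into the lift of `u ↦ f(η(α) u)` at centre `α⁻¹ a` and height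
`γ - ν α`; its integral picks up `|η α|⁻¹` on the residue field and `X^{-ν α}` from the height.
Both sides are `ℂ(Γ)`-linear in `f`, so agreement on the spanning lifts suffices.
-/

lemma Xp_add {Γ : Type*} [AddCommGroup Γ] [LinearOrder Γ] [IsOrderedAddMonoid Γ] (γ δ : Γ) :
    Xp (γ + δ) = Xp γ * Xp δ := by
  rw [Xp, Xp, Xp, ← map_mul, AddMonoidAlgebra.single_mul_single, one_mul]

namespace LiftSetup

variable {Γ F k : Type*} [AddCommGroup Γ] [LinearOrder Γ] [IsOrderedAddMonoid Γ]
  [Field F] [Field k] (S : LiftSetup Γ F k)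

lemma mul_mem_integers_iff {β : F} (hβ : β ≠ 0) (hνβ : S.ν β = 0) (y : F) :
    y * β ∈ S.integers ↔ y ∈ S.integers := by
  by_cases hy : y = 0
  · simp [hy, integers]
  · simp [integers, hy, hβ, S.ν_mul _ _ hy hβ, hνβ]

def unitPart (α : F) : F := α * S.t (-S.ν α)

variable {S}

lemma unitPart_ne_zero {α : F} (hα : α ≠ 0) : S.unitPart α ≠ 0 :=
  mul_ne_zero hα (S.t_ne _)

lemma ν_unitPart {α : F} (hα : α ≠ 0) : S.ν (S.unitPart α) = 0 := by
  rw [unitPart, S.ν_mul _ _ hα (S.t_ne _), S.ν_t, add_neg_cancel]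

lemma unitPart_mem_integers {α : F} (hα : α ≠ 0) : S.unitPart α ∈ S.integers :=
  Or.inr (ν_unitPart hα).ge

lemma η_ne_zero {α : F} (hα : α ≠ 0) : S.η α ≠ 0 := by
  intro h
  rcases (S.ρ_eq_zero _ (unitPart_mem_integers hα)).mp h with h | h
  · exact unitPart_ne_zero hα h
  · rw [ν_unitPart hα] at h
    exact lt_irrefl _ h

lemma lift_comp_mul {A : Type*} [Zero A] (f : k → A) (a : F) (γ : Γ) {α : F} (hα : α ≠ 0) :
    (fun x => S.lift f a γ (α * x)) =
      S.lift (fun u => f (S.η α * u)) (α⁻¹ * a) (γ - S.ν α) := by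
  funext x
  have hrescale :
      (α * x - a) * S.t (-γ) = (x - α⁻¹ * a) * S.t (-(γ - S.ν α)) * S.unitPart α := by
    have ht : S.t (-γ) = S.t (-(γ - S.ν α)) * S.t (-S.ν α) := by
      rw [← S.t_add]; congr 1; abel
    rw [ht, unitPart]
    field_simp
  have hmem : α * x ∈ S.fracIdeal a γ ↔ x ∈ S.fracIdeal (α⁻¹ * a) (γ - S.ν α) := by
    simp only [fracIdeal, Set.mem_ofPred_eq, hrescale]
    exact S.mul_mem_integers_iff (unitPart_ne_zero hα) (ν_unitPart hα) _
  by_cases hx : x ∈ S.fracIdeal (α⁻¹ * a) (γ - S.ν α)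
  · rw [lift, lift, Set.indicator_of_mem (hmem.mpr hx), Set.indicator_of_mem hx, hrescale,
      S.ρ_mul _ _ hx (unitPart_mem_integers hα), mul_comm]
    rfl
  · rw [lift, lift, Set.indicator_of_notMem (hmem.not.mpr hx), Set.indicator_of_notMem hx]

end LiftSetup

section Scaling

open LiftSetup

variable {Γ F k : Type*} [AddCommGroup Γ] [LinearOrder Γ] [IsOrderedAddMonoid Γ]
  [Field F] [Field k] [MeasurableSpace k] {μ : Measure k} {S : LiftSetup Γ F k} {α : F}

abbrev compMul (α : F) : (F → CGamma Γ) →ₗ[CGamma Γ] F → CGamma Γ :=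
  LinearMap.funLeft (CGamma Γ) (CGamma Γ) (α * ·)

lemma LFmu_le_comap_compMul (hα : α ≠ 0)
    (hint : ∀ g : k → ℂ, Integrable g μ → Integrable (fun u => g (S.η α * u)) μ) :
    LFmu S μ ≤ (LFmu S μ).comap (compMul α) := by
  refine Submodule.span_le.mpr ?_
  rintro _ ⟨f, hf, a, γ, rfl⟩
  change (fun x => S.lift (fun u => embC Γ (f u)) a γ (α * x)) ∈ LFmu S μ
  rw [lift_comp_mul _ _ _ hα]
  exact liftC_mem_mu S μ (hint f hf) _ _

lemma LFmu_integral_comp_mul (hα : α ≠ 0) (r : ℝ)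
    (hscale : ∀ g : k → ℂ, Integrable g μ →
      Integrable (fun u => g (S.η α * u)) μ ∧
        ∫ u, g (S.η α * u) ∂μ = r • ∫ u, g u ∂μ)
    (J : LFmu S μ →ₗ[CGamma Γ] CGamma Γ)
    (hJ : ∀ (f : k → ℂ) (hf : Integrable f μ) (a : F) (γ : Γ),
      J ⟨S.lift (fun u => embC Γ (f u)) a γ, liftC_mem_mu S μ hf a γ⟩
        = embC Γ (∫ u, f u ∂μ) * Xp γ) :
    J ∘ₗ (compMul α).restrict (LFmu_le_comap_compMul hα fun g hg => (hscale g hg).1)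
      = (embC Γ (r : ℂ) * Xp (-S.ν α)) • J := by
  refine LinearMap.ext_on Submodule.span_span_coe_preimage ?_
  rintro ⟨_, hmem⟩ ⟨f, hf, a, γ, rfl⟩
  have hcomp : (⟨_, (LFmu_le_comap_compMul hα fun g hg => (hscale g hg).1) hmem⟩ : LFmu S μ)
      = ⟨_, liftC_mem_mu S μ (hscale f hf).1 (α⁻¹ * a) (γ - S.ν α)⟩ :=
    Subtype.ext (lift_comp_mul (fun u => embC Γ (f u)) a γ hα)
  simp only [LinearMap.comp_apply, LinearMap.restrict_apply, LinearMap.smul_apply, smul_eq_mul]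
  rw [hcomp, hJ _ (hscale f hf).1, hJ _ hf, (hscale f hf).2, Complex.real_smul, map_mul,
    sub_eq_neg_add, Xp_add]
  ring

end Scaling

open MeasureTheory in
theorem statement8_general
    {Γ F k : Type*} [AddCommGroup Γ] [LinearOrder Γ] [IsOrderedAddMonoid Γ] [Field F] [Field k]
    [MeasurableSpace k]
    (μ : Measure k)
    (S : LiftSetup Γ F k)
    -- the normalized absolute value on `k`:
    (abs : k → ℝ)
    (habs : ∀ (g : k → ℂ), Integrable g μ → ∀ c : k, c ≠ 0 →
      Integrable (fun u => g (c * u)) μ ∧ (∫ u, g (c * u) ∂μ) = (abs c)⁻¹ • ∫ u, g u ∂μ)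
    -- the integral `∫^F` on `𝓛(F)`:
    (J : LFmu S μ →ₗ[CGamma Γ] CGamma Γ)
    (hJ : ∀ (f : k → ℂ) (hf : Integrable f μ) (a : F) (γ : Γ),
      J ⟨S.lift (fun u => embC Γ (f u)) a γ, liftC_mem_mu S μ hf a γ⟩
        = embC Γ (∫ u, f u ∂μ) * Xp γ)
    (f : F → CGamma Γ) (hf : f ∈ LFmu S μ) (α : F) (hα : α ≠ 0) :
    ∃ hmem : (fun x => f (α * x)) ∈ LFmu S μ,
      J ⟨fun x => f (α * x), hmem⟩
        = embC Γ (((abs (S.η α))⁻¹ : ℝ) : ℂ) * Xp (-(S.ν α)) * J ⟨f, hf⟩ := by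
  have hscale := fun g hg => habs g hg (S.η α) (LiftSetup.η_ne_zero hα)
  exact ⟨LFmu_le_comap_compMul hα (fun g hg => (hscale g hg).1) hf,
    LinearMap.congr_fun (LFmu_integral_comp_mul hα _ hscale J hJ) ⟨f, hf⟩⟩

open MeasureTheory in
/-- For every `f ∈ 𝓛(F)` and `α ∈ F^×`, the function `x ↦ f(αx)` belongs
to `𝓛(F)` and `∫^F f(αx) dx = |η(α)|⁻¹·X^{-ν(α)}·∫^F f(x) dx`, where `|·|` is the
normalized absolute value of the residue field `k`. -/
theorem statement8
    {Γ F k : Type*} [AddCommGroup Γ] [LinearOrder Γ] [IsOrderedAddMonoid Γ] [Field F] [Field k]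
    [TopologicalSpace k] [IsTopologicalRing k] [LocallyCompactSpace k]
    [MeasurableSpace k] [BorelSpace k]
    (hk_nondiscrete : ¬ IsOpen ({0} : Set k))
    (μ : Measure k) [μ.IsAddHaarMeasure]
    (S : LiftSetup Γ F k)
    -- the normalized absolute value on `k`:
    (abs : k → ℝ)
    (habs_pos : ∀ c : k, c ≠ 0 → 0 < abs c)
    (habs : ∀ (g : k → ℂ), Integrable g μ → ∀ c : k, c ≠ 0 →
      Integrable (fun u => g (c * u)) μ ∧ (∫ u, g (c * u) ∂μ) = (abs c)⁻¹ • ∫ u, g u ∂μ)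
    -- the integral `∫^F` on `𝓛(F)`:
    (J : LFmu S μ →ₗ[CGamma Γ] CGamma Γ)
    (hJ : ∀ (f : k → ℂ) (hf : Integrable f μ) (a : F) (γ : Γ),
      J ⟨S.lift (fun u => embC Γ (f u)) a γ, liftC_mem_mu S μ hf a γ⟩
        = embC Γ (∫ u, f u ∂μ) * Xp γ)
    (f : F → CGamma Γ) (hf : f ∈ LFmu S μ) (α : F) (hα : α ≠ 0) :
    ∃ hmem : (fun x => f (α * x)) ∈ LFmu S μ,
      J ⟨fun x => f (α * x), hmem⟩
        = embC Γ (((abs (S.η α))⁻¹ : ℝ) : ℂ) * Xp (-(S.ν α)) * J ⟨f, hf⟩ :=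
  statement8_general μ S abs habs J hJ f hf α hα
end
end

section
/- Let ω be a good multiplicative character of O_F^×, i.e. ω(x) = ω̄(ρ(x)) for all x ∈ O_F^× for some quasi-character (continuous homomorphism) ω̄ : k^× → ℂ^×. Let g be a Schwartz–Bruhat function on k, a ∈ O_F, b ∈ F, and set f = g^{a,0}·ψ_b. Then for every s ∈ ℂ with Re(s) sufficiently large, the function x ↦ f(x)ω(x)|x|_F^s·1_{O_F^×}(x) belongs to 𝓛(F^×,ψ) and the zeta integral ζ_F^1(f,ω,s) := ∫^{F^×} f(x)ω(x)|x|_F^s·1_{O_F^×}(x) d^×x equals ζ_k(g_1·ψ̄_{ρ(b)}, ω̄, s) if ν(b) ≥ 0, and equals 0 if ν(b) < 0; here g_1(u) := g(u − ρ(a)), ψ̄_c(u) := ψ̄(cu), and ζ_k(h, ω̄, s) := ∫_{k^×} h(u)ω̄(u)|u|^s d^×u with d^×u = |u|^{−1}du. -/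
noncomputable section

open MeasureTheory

section GoodChar

variable {Γ F k : Type*} [AddCommGroup Γ] [LinearOrder Γ] [IsOrderedAddMonoid Γ] [Field F] [Field k] [TopologicalSpace k]

/-- `ψ` is a nontrivial good character of `F` of conductor `𝔣`: a homomorphism from the
additive group of `F` to the complex unit circle, trivial on `t(𝔣)O_F`, nontrivial on
`t(𝔣-1)O_F`, whose induced map `ψ̄` on the residue field `k` (given by
`ψ̄(ρ(x)) = ψ(t(𝔣-1)x)` for `x ∈ O_F`) is well defined and continuous. -/
def LiftSetup.IsGoodCharacter (S : LiftSetup Γ F k) (ψ : F → ℂ) (𝔣 : Γ) : Prop :=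
  (∀ x y : F, ψ (x + y) = ψ x * ψ y) ∧
  (∀ x : F, ‖ψ x‖ = 1) ∧
  (∀ x ∈ S.integers, ψ (S.t 𝔣 * x) = 1) ∧
  (∃ x ∈ S.integers, ψ (S.t (𝔣 - S.one) * x) ≠ 1) ∧
  (∃ ψbar : k → ℂ, Continuous ψbar ∧
    ∀ x ∈ S.integers, ψbar (S.ρ x) = ψ (S.t (𝔣 - S.one) * x))

end GoodChar

section LFpsi

variable {Γ F k : Type*} [AddCommGroup Γ] [LinearOrder Γ] [IsOrderedAddMonoid Γ] [Field F] [Field k]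
  [MeasurableSpace k]

open MeasureTheory

/-- `𝓛(F,ψ)`: the `ℂ(Γ)`-span of the functions `f·ψ_a` for `f ∈ 𝓛(F)`, `a ∈ F`. -/
def LFpsi (S : LiftSetup Γ F k) (μ : Measure k) (ψ : F → ℂ) :
    Submodule (CGamma Γ) (F → CGamma Γ) :=
  Submodule.span (CGamma Γ)
    {g | ∃ f ∈ LFmu S μ, ∃ a : F, g = fun x => embC Γ (ψ (a * x)) * f x}

end LFpsi

section Mult

variable {Γ F k : Type*} [AddCommGroup Γ] [LinearOrder Γ] [IsOrderedAddMonoid Γ] [Field F] [Field k]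
  [MeasurableSpace k]

open MeasureTheory

/-- The absolute value `|α|_F = |η(α)|·X^{ν(α)} ∈ ℂ(Γ)` of `α ∈ F^×`. -/
noncomputable def absF (S : LiftSetup Γ F k) (abs : k → ℝ) (x : F) : CGamma Γ :=
  embC Γ ((abs (S.η x) : ℝ) : ℂ) * Xp (S.ν x)

/-- `φ ∈ 𝓛(F^×,ψ)`: the function `x ↦ φ(x)|x|_F⁻¹` on `F^×` extends to a function
in `𝓛(F,ψ)`. -/
def MultIntegrable (S : LiftSetup Γ F k) (μ : Measure k) (ψ : F → ℂ) (abs : k → ℝ)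
    (φ : F → CGamma Γ) : Prop :=
  ∃ h ∈ LFpsi S μ ψ, ∀ x : F, x ≠ 0 → h x = φ x * (absF S abs x)⁻¹

open scoped Classical in
/-- The multiplicative integral `∫^{F^×} φ(x) d^×x := ∫^F φ(x)|x|_F⁻¹ dx`. -/
noncomputable def multIntegral (S : LiftSetup Γ F k) (μ : Measure k) (ψ : F → ℂ)
    (abs : k → ℝ) (Jext : LFpsi S μ ψ →ₗ[CGamma Γ] CGamma Γ)
    (φ : F → CGamma Γ) : CGamma Γ :=
  if hm : MultIntegrable S μ ψ abs φ then
    Jext ⟨Classical.choose hm, (Classical.choose_spec hm).1⟩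
  else 0

end Mult

open scoped Classical in
/-- The integrand `x ↦ f(x)ω(x)|x|_F^s·1_{O_F^×}(x)` of the one-dimensional local zeta
integral on `F`, for `f = g^{a,0}·ψ_b` and a good multiplicative character `ω = ω̄ ∘ ρ`. -/
noncomputable def zetaIntegrandF {Γ F k : Type*} [AddCommGroup Γ] [LinearOrder Γ] [IsOrderedAddMonoid Γ] [Field F]
    [Field k] (S : LiftSetup Γ F k) (abs : k → ℝ) (g : k → ℂ) (a b : F) (ψ : F → ℂ)
    (ωbar : k → ℂ) (s : ℂ) : F → CGamma Γ :=
  fun x =>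
    if x ≠ 0 ∧ S.ν x = 0 then
      embC Γ (S.lift g a 0 x * ψ (b * x) * ωbar (S.ρ x) * ((abs (S.η x) : ℂ) ^ s))
    else 0

open scoped Classical in
/-- The integrand of the local zeta integral `ζ_k(g₁·ψ̄_{ρ(b)}, ω̄, s)` on the residue
field `k`, with respect to `d^×u = |u|⁻¹du`. -/
noncomputable def zetaIntegrandk {k : Type*} [Field k] (abs : k → ℝ) (g₁ : k → ℂ)
    (c : k) (ψbar : k → ℂ) (ωbar : k → ℂ) (s : ℂ) : k → ℂ :=
  fun u =>
    if u ≠ 0 then g₁ u * ψbar (c * u) * ωbar u * ((abs u : ℂ) ^ s) * ((abs u : ℝ) : ℂ)⁻¹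
    else 0

/-! On `O_F^×` the integrand is the lift to height `0` of the residue integrand
`Z₀(u) = g(u - ρ(a)) ω̄(u)|u|^{s-1}`, twisted by `ψ_b`: the function `x ↦ ψ(bx)·Z₀^{0,0}(x)` lies in
`𝓛(F,ψ)` and extends `x ↦ f(x)ω(x)|x|_F^{s-1}·1_{O_F^×}(x)` (the indicator of `O_F^×` is `ρ(x) ≠ 0`,
where `Z₀` is supported). Every element of `𝓛(F,ψ)` is invariant under translation by some
`t(δ)O_F`, hence determined by its values on `F^×`, so this extension computes `ζ_F^1`.
If `b ∈ O_F`, then `ψ_b = ψ̄_{ρ(b)} ∘ ρ` on `O_F`, the extension is the lift of the residue zeta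
integrand, and its integral is `ζ_k`. If `ν(b) < 0`, pick `τ` with `ν(τ) > 0` and `ψ(bτ) ≠ 1`:
translation by `τ` multiplies the extension by `ψ(bτ)`, so translation invariance of `∫^F` forces
the integral to vanish. -/

namespace LiftSetup

variable {Γ F k : Type*} [AddCommGroup Γ] [LinearOrder Γ] [IsOrderedAddMonoid Γ] [Field F] [Field k]
variable (S : LiftSetup Γ F k)

theorem t_zero : S.t 0 = 1 := by
  have h := S.t_add 0 0
  rw [add_zero] at h
  exact (mul_eq_left₀ (S.t_ne 0)).mp h.symm

theorem ν_one : S.ν 1 = 0 := by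
  have h := S.ν_mul 1 1 one_ne_zero one_ne_zero
  rw [mul_one] at h
  exact left_eq_add.mp h

theorem ν_neg (x : F) (hx : x ≠ 0) : S.ν (-x) = S.ν x := by
  have h := S.ν_mul (-1) (-1) (by norm_num) (by norm_num)
  rw [neg_mul_neg, one_mul, ν_one] at h
  have hν : S.ν (-1 : F) = 0 := by
    rcases lt_trichotomy (S.ν (-1 : F)) 0 with hlt | h0 | hgt
    · exact absurd h.symm (add_neg hlt hlt).ne
    · exact h0
    · exact absurd h.symm (add_pos hgt hgt).ne'
  rw [← neg_one_mul, S.ν_mul _ _ (by norm_num) hx, hν, zero_add]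

def integersSubring : Subring F where
  carrier := S.integers
  zero_mem' := Or.inl rfl
  one_mem' := Or.inr (S.ν_one).ge
  add_mem' {x y} hx hy := by
    by_cases hx0 : x = 0
    · simpa [hx0] using hy
    by_cases hy0 : y = 0
    · simpa [hy0] using hx
    by_cases hxy : x + y = 0
    · exact Or.inl hxy
    exact Or.inr ((le_min (hx.resolve_left hx0) (hy.resolve_left hy0)).trans
      (S.ν_add x y hx0 hy0 hxy))
  mul_mem' {x y} hx hy := by
    by_cases hx0 : x = 0
    · simp [hx0, integers]
    by_cases hy0 : y = 0
    · simp [hy0, integers]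
    exact Or.inr (by
      rw [S.ν_mul x y hx0 hy0]
      exact add_nonneg (hx.resolve_left hx0) (hy.resolve_left hy0))
  neg_mem' {x} hx := by
    by_cases hx0 : x = 0
    · simp [hx0, integers]
    exact Or.inr ((S.ν_neg x hx0).symm ▸ hx.resolve_left hx0)

theorem ρ_sub {x y : F} (hx : x ∈ S.integers) (hy : y ∈ S.integers) :
    S.ρ (x - y) = S.ρ x - S.ρ y := by
  have h := S.ρ_add (x - y) y (S.integersSubring.sub_mem hx hy) hy
  rw [sub_add_cancel] at h
  exact eq_sub_of_add_eq h.symm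

theorem ρ_eq_zero_of_pos {x : F} (hx : 0 < S.ν x) : S.ρ x = 0 :=
  (S.ρ_eq_zero x (Or.inr hx.le)).mpr (Or.inr hx)

theorem ρ_ne_zero_iff {x : F} (hx : x ∈ S.integers) : S.ρ x ≠ 0 ↔ x ≠ 0 ∧ S.ν x = 0 := by
  rw [Ne, S.ρ_eq_zero x hx, not_or, not_lt]
  exact and_congr_right fun hx0 => (hx.resolve_left hx0).ge_iff_eq'

theorem η_of_ν_eq_zero {x : F} (hx : S.ν x = 0) : S.η x = S.ρ x := by
  rw [η, hx, neg_zero, t_zero, mul_one]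

theorem lift_zero_zero {A : Type*} [Zero A] (f : k → A) :
    S.lift f 0 0 = S.integers.indicator fun x => f (S.ρ x) := by
  simp [lift, fracIdeal, t_zero]

theorem lift_zero_of_mem {A : Type*} [Zero A] (f : k → A) {a x : F} (ha : a ∈ S.integers)
    (hx : x ∈ S.integers) : S.lift f a 0 x = f (S.ρ x - S.ρ a) := by
  have hxa : x - a ∈ S.integers := S.integersSubring.sub_mem hx ha
  rw [lift, Set.indicator_of_mem (by simpa [fracIdeal, t_zero] using hxa), neg_zero, t_zero,
    mul_one, S.ρ_sub hx ha]

theorem lift_add_of_lt {A : Type*} [Zero A] (f : k → A) (a : F) {γ : Γ} {τ : F} (hτ : τ ≠ 0)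
    (hγτ : γ < S.ν τ) (x : F) : S.lift f a γ (x + τ) = S.lift f a γ x := by
  set w := τ * S.t (-γ)
  have hw : 0 < S.ν w := by
    rw [S.ν_mul _ _ hτ (S.t_ne _), S.ν_t, ← sub_eq_add_neg]
    exact sub_pos.mpr hγτ
  have hwO : w ∈ S.integers := Or.inr hw.le
  have hsplit : (x + τ - a) * S.t (-γ) = (x - a) * S.t (-γ) + w := by ring
  have hmem : x + τ ∈ S.fracIdeal a γ ↔ x ∈ S.fracIdeal a γ := by
    simp only [fracIdeal, Set.mem_ofPred_eq, hsplit]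
    exact ⟨fun h => add_sub_cancel_right ((x - a) * S.t (-γ)) w ▸
      S.integersSubring.sub_mem h hwO, fun h => S.integersSubring.add_mem h hwO⟩
  by_cases hx : x ∈ S.fracIdeal a γ
  · rw [lift, Set.indicator_of_mem (hmem.mpr hx), Set.indicator_of_mem hx, hsplit,
      S.ρ_add _ _ hx hwO, S.ρ_eq_zero_of_pos hw, add_zero]
  · rw [lift, Set.indicator_of_notMem (mt hmem.mp hx), Set.indicator_of_notMem hx]

def uniformlyLocallyConstant (R M : Type*) [Semiring R] [AddCommMonoid M] [Module R M] :
    Submodule R (F → M) where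
  carrier := {d | ∃ δ : Γ, ∀ x τ : F, τ ≠ 0 → δ ≤ S.ν τ → d (x + τ) = d x}
  zero_mem' := ⟨0, fun _ _ _ _ => rfl⟩
  add_mem' := by
    rintro d e ⟨δ, hd⟩ ⟨ε, he⟩
    exact ⟨max δ ε, fun x τ hτ h => by
      simp [hd x τ hτ (le_of_max_le_left h), he x τ hτ (le_of_max_le_right h)]⟩
  smul_mem' := by
    rintro c d ⟨δ, hd⟩
    exact ⟨δ, fun x τ hτ h => by simp [hd x τ hτ h]⟩

theorem mul_mem_uniformlyLocallyConstant {A : Type*} [CommSemiring A] {d e : F → A}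
    (hd : d ∈ S.uniformlyLocallyConstant A A) (he : e ∈ S.uniformlyLocallyConstant A A) :
    d * e ∈ S.uniformlyLocallyConstant A A := by
  obtain ⟨δ, hd⟩ := hd
  obtain ⟨ε, he⟩ := he
  exact ⟨max δ ε, fun x τ hτ h => by
    simp [hd x τ hτ (le_of_max_le_left h), he x τ hτ (le_of_max_le_right h)]⟩

theorem lift_mem_uniformlyLocallyConstant {R M : Type*} [Semiring R] [AddCommMonoid M]
    [Module R M] (f : k → M) (a : F) (γ : Γ) :
    S.lift f a γ ∈ S.uniformlyLocallyConstant R M :=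
  ⟨γ + S.one, fun x _ hτ h =>
    S.lift_add_of_lt f a hτ ((lt_add_of_pos_right γ S.one_pos).trans_le h) x⟩

theorem eq_zero_of_mem_uniformlyLocallyConstant {R M : Type*} [Semiring R] [AddCommMonoid M]
    [Module R M] {d : F → M} (hd : d ∈ S.uniformlyLocallyConstant R M)
    (h : ∀ x, x ≠ 0 → d x = 0) : d = 0 := by
  obtain ⟨δ, hδ⟩ := hd
  funext x
  rcases eq_or_ne x 0 with rfl | hx
  · simpa [h _ (S.t_ne δ)] using (hδ 0 (S.t δ) (S.t_ne δ) (S.ν_t δ).ge).symm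
  · exact h x hx

end LiftSetup

namespace LiftSetup.IsGoodCharacter

variable {Γ F k : Type*} [AddCommGroup Γ] [LinearOrder Γ] [IsOrderedAddMonoid Γ] [Field F] [Field k]
  [TopologicalSpace k] {S : LiftSetup Γ F k} {ψ : F → ℂ} {𝔣 : Γ}

theorem map_add_of_le (hψ : S.IsGoodCharacter ψ 𝔣) (x : F) {τ : F} (hτ : τ ≠ 0)
    (h : 𝔣 ≤ S.ν τ) : ψ (x + τ) = ψ x := by
  obtain ⟨hadd, -, htriv, -⟩ := hψ
  have hτO : S.t (-𝔣) * τ ∈ S.integers := Or.inr (by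
    rw [S.ν_mul _ _ (S.t_ne _) hτ, S.ν_t, neg_add_eq_sub]
    exact sub_nonneg.mpr h)
  have hτ1 : ψ τ = 1 := by
    simpa [← mul_assoc, ← S.t_add, S.t_zero] using htriv _ hτO
  rw [hadd, hτ1, mul_one]

theorem comp_mul_mem_uniformlyLocallyConstant {R M : Type*} [Semiring R] [AddCommMonoid M]
    [Module R M] (hψ : S.IsGoodCharacter ψ 𝔣) (φ : ℂ → M) (c : F) :
    (fun x => φ (ψ (c * x))) ∈ S.uniformlyLocallyConstant R M := by
  rcases eq_or_ne c 0 with rfl | hc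
  · exact ⟨0, fun x τ _ _ => by simp⟩
  refine ⟨𝔣 - S.ν c, fun x τ hτ h => ?_⟩
  simp only [mul_add]
  rw [hψ.map_add_of_le _ (mul_ne_zero hc hτ)
    (by rw [S.ν_mul _ _ hc hτ]; exact sub_le_iff_le_add'.mp h)]

theorem exists_ne_one (hψ : S.IsGoodCharacter ψ S.one) : ∃ x ∈ S.integers, ψ x ≠ 1 := by
  simpa [S.t_zero] using hψ.2.2.2.1

theorem exists_translate_ne_one (hψ : S.IsGoodCharacter ψ S.one) {b : F} (hb : b ≠ 0)
    (hbν : S.ν b < 0) : ∃ τ : F, τ ≠ 0 ∧ 0 < S.ν τ ∧ ψ (b * τ) ≠ 1 := by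
  obtain ⟨x₀, hx₀O, hx₀⟩ := hψ.exists_ne_one
  have hx₀0 : x₀ ≠ 0 := by
    rintro rfl
    exact hx₀ (by simpa using hψ.2.2.1 0 (Or.inl rfl))
  have hbτ : b * (b⁻¹ * x₀) = x₀ := by field_simp
  refine ⟨b⁻¹ * x₀, mul_ne_zero (inv_ne_zero hb) hx₀0, ?_, by rwa [hbτ]⟩
  have hν := S.ν_mul b (b⁻¹ * x₀) hb (mul_ne_zero (inv_ne_zero hb) hx₀0)
  rw [hbτ] at hν
  have hx₀ν := hx₀O.resolve_left hx₀0
  rw [hν] at hx₀ν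
  exact lt_of_not_ge fun h => (add_neg_of_neg_of_nonpos hbν h).not_ge hx₀ν

end LiftSetup.IsGoodCharacter

section Integral

variable {Γ F k : Type*} [AddCommGroup Γ] [LinearOrder Γ] [IsOrderedAddMonoid Γ] [Field F] [Field k]
  [MeasurableSpace k] (S : LiftSetup Γ F k) (μ : Measure k)

theorem LFmu_le_uniformlyLocallyConstant :
    LFmu S μ ≤ S.uniformlyLocallyConstant (CGamma Γ) (CGamma Γ) :=
  Submodule.span_le.mpr <| by
    rintro _ ⟨f, -, a, γ, rfl⟩
    exact S.lift_mem_uniformlyLocallyConstant _ a γ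

theorem LFpsi_le_uniformlyLocallyConstant [TopologicalSpace k] {ψ : F → ℂ} {𝔣 : Γ}
    (hψ : S.IsGoodCharacter ψ 𝔣) :
    LFpsi S μ ψ ≤ S.uniformlyLocallyConstant (CGamma Γ) (CGamma Γ) :=
  Submodule.span_le.mpr <| by
    rintro _ ⟨f, hf, a, rfl⟩
    exact S.mul_mem_uniformlyLocallyConstant (hψ.comp_mul_mem_uniformlyLocallyConstant _ a)
      (LFmu_le_uniformlyLocallyConstant S μ hf)

theorem multIntegral_eq_of_mem [TopologicalSpace k] {ψ : F → ℂ} {𝔣 : Γ}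
    (hψ : S.IsGoodCharacter ψ 𝔣) (abs : k → ℝ) (Jext : LFpsi S μ ψ →ₗ[CGamma Γ] CGamma Γ)
    {φ W : F → CGamma Γ} (hW : W ∈ LFpsi S μ ψ)
    (hWφ : ∀ x, x ≠ 0 → W x = φ x * (absF S abs x)⁻¹) :
    multIntegral S μ ψ abs Jext φ = Jext ⟨W, hW⟩ := by
  have hφ : MultIntegrable S μ ψ abs φ := ⟨W, hW, hWφ⟩
  obtain ⟨hmem, hspec⟩ := Classical.choose_spec hφ
  rw [multIntegral, dif_pos hφ]
  congr 1
  refine Subtype.ext (sub_eq_zero.mp (S.eq_zero_of_mem_uniformlyLocallyConstant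
    (LFpsi_le_uniformlyLocallyConstant S μ hψ (Submodule.sub_mem _ hmem hW)) fun x hx => ?_))
  simp [hspec x hx, hWφ x hx]

end Integral

theorem LinearMap.eq_zero_of_translate_eq_smul {G K : Type*} [Add G] [Field K]
    {V : Submodule K (G → K)} (J : V →ₗ[K] K)
    (hJ : ∀ (g : G → K) (hg : g ∈ V) (τ : G) (hg' : (fun x => g (x + τ)) ∈ V),
      J ⟨fun x => g (x + τ), hg'⟩ = J ⟨g, hg⟩)
    {W : G → K} (hW : W ∈ V) {τ : G} {c : K} (hc : c ≠ 1)
    (hshift : (fun x => W (x + τ)) = c • W) : J ⟨W, hW⟩ = 0 := by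
  have hmem : (fun x => W (x + τ)) ∈ V := hshift ▸ V.smul_mem c hW
  have h := hJ W hW τ hmem
  rw [show (⟨fun x => W (x + τ), hmem⟩ : V) = c • ⟨W, hW⟩ from Subtype.ext hshift,
    map_smul, smul_eq_mul] at h
  exact (mul_left_eq_self₀.mp h).resolve_left hc

theorem Xp_zero {Γ : Type*} [AddCommGroup Γ] [LinearOrder Γ] [IsOrderedAddMonoid Γ] :
    (Xp (0 : Γ) : CGamma Γ) = 1 := by
  rw [Xp, ← AddMonoidAlgebra.one_def, map_one]

section Zeta

variable {k : Type*} [Field k]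

theorem zetaIntegrandk_eq_mul (abs : k → ℝ) (g₁ : k → ℂ) (c : k) (ψbar ωbar : k → ℂ) (s : ℂ)
    (u : k) : zetaIntegrandk abs g₁ c ψbar ωbar s u =
      ψbar (c * u) * zetaIntegrandk abs g₁ 0 (fun _ => 1) ωbar s u := by
  unfold zetaIntegrandk
  split_ifs <;> ring

theorem integrable_zetaIntegrandk_zero [TopologicalSpace k] [IsTopologicalRing k]
    [MeasurableSpace k] [BorelSpace k] {μ : Measure k} {abs : k → ℝ} {g₁ : k → ℂ} {c : k}
    {ψbar ωbar : k → ℂ} {s : ℂ} (hψbar : Continuous ψbar) (hnorm : ∀ v, ‖ψbar v‖ = 1)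
    (h : Integrable (zetaIntegrandk abs g₁ c ψbar ωbar s) μ) :
    Integrable (zetaIntegrandk abs g₁ 0 (fun _ => 1) ωbar s) μ := by
  have hconj : AEStronglyMeasurable (fun u => starRingEnd ℂ (ψbar (c * u))) μ :=
    (Complex.continuous_conj.comp (hψbar.comp (continuous_const_mul c))).aestronglyMeasurable
  refine (h.bdd_mul hconj (c := 1) (.of_forall fun u => by simp [hnorm])).congr
    (.of_forall fun u => ?_)
  simp [zetaIntegrandk_eq_mul _ _ c, ← mul_assoc, Complex.conj_mul', hnorm]

end Zeta

namespace LiftSetup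

variable {Γ F k : Type*} [AddCommGroup Γ] [LinearOrder Γ] [IsOrderedAddMonoid Γ] [Field F] [Field k]
  (S : LiftSetup Γ F k)

theorem norm_eq_one_of_comp_ρ {ψ : F → ℂ} {ψbar : k → ℂ} (hψ : ∀ x, ‖ψ x‖ = 1)
    (hψbar : ∀ x ∈ S.integers, ψbar (S.ρ x) = ψ x) (v : k) : ‖ψbar v‖ = 1 := by
  obtain ⟨x, hx, rfl⟩ := S.ρ_surj v
  rw [hψbar x hx, hψ x]

variable (ψ : F → ℂ)

def twistedLift (b : F) (f : k → ℂ) : F → CGamma Γ :=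
  fun x => embC Γ (ψ (b * x)) * S.lift (fun u => embC Γ (f u)) 0 0 x

theorem twistedLift_mem_LFpsi [MeasurableSpace k] (μ : Measure k) (b : F) {f : k → ℂ}
    (hf : Integrable f μ) : S.twistedLift ψ b f ∈ LFpsi S μ ψ :=
  Submodule.subset_span ⟨_, liftC_mem_mu S μ hf 0 0, b, rfl⟩

theorem twistedLift_eq_lift {ψbar : k → ℂ} (hψbar : ∀ x ∈ S.integers, ψbar (S.ρ x) = ψ x)
    {b : F} (hb : b ∈ S.integers) (f : k → ℂ) :
    S.twistedLift ψ b f = S.lift (fun u => embC Γ (ψbar (S.ρ b * u) * f u)) 0 0 := by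
  funext x
  simp only [twistedLift, lift_zero_zero]
  by_cases hx : x ∈ S.integers
  · rw [Set.indicator_of_mem hx, Set.indicator_of_mem hx, ← S.ρ_mul _ _ hb hx,
      hψbar _ (S.integersSubring.mul_mem hb hx), map_mul]
  · simp [hx]

theorem twistedLift_add (hψ : ∀ x y, ψ (x + y) = ψ x * ψ y) (b : F) (f : k → ℂ)
    {τ : F} (hτ : τ ≠ 0) (hτν : 0 < S.ν τ) :
    (fun x => S.twistedLift ψ b f (x + τ)) = embC Γ (ψ (b * τ)) • S.twistedLift ψ b f := by
  funext x
  simp only [twistedLift, Pi.smul_apply, smul_eq_mul, mul_add, hψ, map_mul,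
    S.lift_add_of_lt _ 0 hτ hτν]
  ring

theorem zetaIntegrandF_mul_absF_inv (abs : k → ℝ) (g : k → ℂ) {a : F} (b : F) (ωbar : k → ℂ)
    (s : ℂ) (ha : a ∈ S.integers) {x : F} (hx : x ≠ 0) :
    zetaIntegrandF S abs g a b ψ ωbar s x * (absF S abs x)⁻¹ =
      S.twistedLift ψ b (zetaIntegrandk abs (fun u => g (u - S.ρ a)) 0 (fun _ => 1) ωbar s) x := by
  rw [twistedLift, lift_zero_zero]
  by_cases hxO : x ∈ S.integers
  · rw [Set.indicator_of_mem hxO]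
    by_cases hρ : S.ρ x = 0
    · have hν : ¬(x ≠ 0 ∧ S.ν x = 0) := fun h => (S.ρ_ne_zero_iff hxO).mpr h hρ
      simp [zetaIntegrandF, zetaIntegrandk, hν, hρ]
    · obtain ⟨-, hν⟩ := (S.ρ_ne_zero_iff hxO).mp hρ
      simp only [zetaIntegrandF, zetaIntegrandk, absF, if_pos (And.intro hx hν), if_pos hρ,
        S.lift_zero_of_mem g ha hxO, S.η_of_ν_eq_zero hν, hν, Xp_zero, mul_one]
      rw [← map_inv₀, ← map_mul, ← map_mul]
      congr 1
      ring
  · have hν : ¬(x ≠ 0 ∧ S.ν x = 0) := fun h => hxO (Or.inr h.2.ge)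
    simp [zetaIntegrandF, hν, hxO]

end LiftSetup

open MeasureTheory in
theorem statement10_general
    {Γ F k : Type*} [AddCommGroup Γ] [LinearOrder Γ] [IsOrderedAddMonoid Γ] [Field F] [Field k]
    [TopologicalSpace k] [IsTopologicalRing k]
    [MeasurableSpace k] [BorelSpace k]
    (μ : Measure k)
    (S : LiftSetup Γ F k)
    (ψ : F → ℂ) (hψ : S.IsGoodCharacter ψ S.one)
    (ψbar : k → ℂ) (hψbar_cont : Continuous ψbar)
    (hψbar : ∀ x ∈ S.integers, ψbar (S.ρ x) = ψ x)
    -- the normalized absolute value on `k`: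
    (abs : k → ℝ)
    -- the quasi-character `ω̄` of `k^×` inducing the good character `ω` of `O_F^×`:
    (ωbar : k → ℂ)
    -- the translation-invariant extension of `∫^F` to `𝓛(F,ψ)`:
    (Jext : LFpsi S μ ψ →ₗ[CGamma Γ] CGamma Γ)
    (hJext : ∀ (f : k → ℂ) (hf : Integrable f μ) (a : F) (γ : Γ)
      (hmem : S.lift (fun u => embC Γ (f u)) a γ ∈ LFpsi S μ ψ),
      Jext ⟨S.lift (fun u => embC Γ (f u)) a γ, hmem⟩ = embC Γ (∫ u, f u ∂μ) * Xp γ)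
    (hJinv : ∀ (g : F → CGamma Γ) (hg : g ∈ LFpsi S μ ψ) (τ : F)
      (hg' : (fun x => g (x + τ)) ∈ LFpsi S μ ψ),
      Jext ⟨fun x => g (x + τ), hg'⟩ = Jext ⟨g, hg⟩)
    -- the Schwartz–Bruhat function `g` on `k`, with `a ∈ O_F`, `b ∈ F`:
    (SchwartzBruhat : Set (k → ℂ))
    (g : k → ℂ) (hg : g ∈ SchwartzBruhat)
    (a : F) (ha : a ∈ S.integers) (b : F)
    -- convergence of the local zeta integral on `k` for `Re(s)` sufficiently large:
    (s₀ : ℝ)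
    (hconv : ∀ s : ℂ, s₀ ≤ s.re →
      Integrable (zetaIntegrandk abs (fun u => g (u - S.ρ a)) (S.ρ b) ψbar ωbar s) μ) :
    ∃ s₁ : ℝ, ∀ s : ℂ, s₁ ≤ s.re →
      MultIntegrable S μ ψ abs (zetaIntegrandF S abs g a b ψ ωbar s) ∧
      ((b = 0 ∨ 0 ≤ S.ν b) →
        multIntegral S μ ψ abs Jext (zetaIntegrandF S abs g a b ψ ωbar s)
          = embC Γ (∫ u, zetaIntegrandk abs (fun u' => g (u' - S.ρ a)) (S.ρ b) ψbar ωbar s u ∂μ)) ∧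
      ((b ≠ 0 ∧ S.ν b < 0) →
        multIntegral S μ ψ abs Jext (zetaIntegrandF S abs g a b ψ ωbar s) = 0) := by
  refine ⟨s₀, fun s hs => ?_⟩
  have hZ₀ := integrable_zetaIntegrandk_zero hψbar_cont
    (S.norm_eq_one_of_comp_ρ hψ.2.1 hψbar) (hconv s hs)
  have hW := S.twistedLift_mem_LFpsi ψ μ b hZ₀
  have hWφ (x : F) (hx : x ≠ 0) := (S.zetaIntegrandF_mul_absF_inv ψ abs g b ωbar s ha hx).symm
  have hζ := multIntegral_eq_of_mem S μ hψ abs Jext hW hWφ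
  refine ⟨⟨_, hW, hWφ⟩, fun hb => ?_, fun ⟨hb0, hbν⟩ => ?_⟩
  · have hWZ :
        S.twistedLift ψ b (zetaIntegrandk abs (fun u => g (u - S.ρ a)) 0 (fun _ => 1) ωbar s) =
        S.lift (fun u => embC Γ (zetaIntegrandk abs (fun u => g (u - S.ρ a)) (S.ρ b) ψbar ωbar s u))
          0 0 := by
      simp only [S.twistedLift_eq_lift ψ hψbar hb, ← zetaIntegrandk_eq_mul]
    have hJ := hJext _ (hconv s hs) 0 0 (hWZ ▸ hW)
    rw [Xp_zero, mul_one] at hJ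
    rw [hζ, ← hJ]
    exact congrArg Jext (Subtype.ext hWZ)
  · obtain ⟨τ, hτ, hτν, hψτ⟩ := hψ.exists_translate_ne_one hb0 hbν
    rw [hζ]
    exact Jext.eq_zero_of_translate_eq_smul hJinv hW
      (fun h => hψτ ((embC Γ).injective (h.trans (map_one _).symm)))
      (S.twistedLift_add ψ hψ.1 b _ hτ hτν)

open MeasureTheory in
/-- Let `ω` be a good multiplicative character of `O_F^×` induced by the
quasi-character `ω̄` of `k^×`, let `g` be a Schwartz–Bruhat function on `k`, `a ∈ O_F`,
`b ∈ F`, and `f = g^{a,0}·ψ_b`.  For `Re(s)` sufficiently large the zeta integrand belongs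
to `𝓛(F^×,ψ)`, and `ζ_F^1(f,ω,s) = ζ_k(g₁·ψ̄_{ρ(b)}, ω̄, s)` if `ν(b) ≥ 0` while
`ζ_F^1(f,ω,s) = 0` if `ν(b) < 0`, where `g₁(u) = g(u - ρ(a))`. -/
theorem statement10
    {Γ F k : Type*} [AddCommGroup Γ] [LinearOrder Γ] [IsOrderedAddMonoid Γ] [Field F] [Field k]
    [TopologicalSpace k] [IsTopologicalRing k] [LocallyCompactSpace k]
    [MeasurableSpace k] [BorelSpace k]
    (hk_nondiscrete : ¬ IsOpen ({0} : Set k))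
    (μ : Measure k) [μ.IsAddHaarMeasure]
    (S : LiftSetup Γ F k)
    (ψ : F → ℂ) (hψ : S.IsGoodCharacter ψ S.one)
    (ψbar : k → ℂ) (hψbar_cont : Continuous ψbar)
    (hψbar : ∀ x ∈ S.integers, ψbar (S.ρ x) = ψ x)
    -- the normalized absolute value on `k`:
    (abs : k → ℝ)
    (habs_pos : ∀ c : k, c ≠ 0 → 0 < abs c)
    (habs : ∀ (g : k → ℂ), Integrable g μ → ∀ c : k, c ≠ 0 →
      Integrable (fun u => g (c * u)) μ ∧ (∫ u, g (c * u) ∂μ) = (abs c)⁻¹ • ∫ u, g u ∂μ)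
    -- the quasi-character `ω̄` of `k^×` inducing the good character `ω` of `O_F^×`:
    (ωbar : k → ℂ)
    (hω_hom : ∀ u v : k, u ≠ 0 → v ≠ 0 → ωbar (u * v) = ωbar u * ωbar v)
    (hω_ne : ∀ u : k, u ≠ 0 → ωbar u ≠ 0)
    (hω_cont : ContinuousOn ωbar {u : k | u ≠ 0})
    -- the translation-invariant extension of `∫^F` to `𝓛(F,ψ)`:
    (Jext : LFpsi S μ ψ →ₗ[CGamma Γ] CGamma Γ)
    (hJext : ∀ (f : k → ℂ) (hf : Integrable f μ) (a : F) (γ : Γ)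
      (hmem : S.lift (fun u => embC Γ (f u)) a γ ∈ LFpsi S μ ψ),
      Jext ⟨S.lift (fun u => embC Γ (f u)) a γ, hmem⟩ = embC Γ (∫ u, f u ∂μ) * Xp γ)
    (hJinv : ∀ (g : F → CGamma Γ) (hg : g ∈ LFpsi S μ ψ) (τ : F)
      (hg' : (fun x => g (x + τ)) ∈ LFpsi S μ ψ),
      Jext ⟨fun x => g (x + τ), hg'⟩ = Jext ⟨g, hg⟩)
    -- the Schwartz–Bruhat function `g` on `k`, with `a ∈ O_F`, `b ∈ F`:
    (SchwartzBruhat : Set (k → ℂ))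
    (hSB_int : ∀ g₀ ∈ SchwartzBruhat, Integrable g₀ μ)
    (g : k → ℂ) (hg : g ∈ SchwartzBruhat)
    (a : F) (ha : a ∈ S.integers) (b : F)
    -- convergence of the local zeta integral on `k` for `Re(s)` sufficiently large:
    (s₀ : ℝ)
    (hconv : ∀ s : ℂ, s₀ ≤ s.re →
      Integrable (zetaIntegrandk abs (fun u => g (u - S.ρ a)) (S.ρ b) ψbar ωbar s) μ) :
    ∃ s₁ : ℝ, ∀ s : ℂ, s₁ ≤ s.re →
      MultIntegrable S μ ψ abs (zetaIntegrandF S abs g a b ψ ωbar s) ∧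
      ((b = 0 ∨ 0 ≤ S.ν b) →
        multIntegral S μ ψ abs Jext (zetaIntegrandF S abs g a b ψ ωbar s)
          = embC Γ (∫ u, zetaIntegrandk abs (fun u' => g (u' - S.ρ a)) (S.ρ b) ψbar ωbar s u ∂μ)) ∧
      ((b ≠ 0 ∧ S.ν b < 0) →
        multIntegral S μ ψ abs Jext (zetaIntegrandF S abs g a b ψ ωbar s) = 0) :=
  statement10_general μ S ψ hψ ψbar hψbar_cont hψbar abs ωbar Jext hJext hJinv SchwartzBruhat g hg a
    ha b s₀ hconv
end
end

section
/- For every Schwartz–Bruhat function g on K and every α ∈ K^×, the *-transform satisfies (x ↦ g(αx))* = |α|^{−2}·(x ↦ g*(α^{−1}x)). -/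
noncomputable section

open MeasureTheory
open scoped Classical

section NALF

variable {K : Type*}

/-- The normalized absolute value `|x| = q^{-w(x)}` of a nonarchimedean local field. -/
noncomputable def absv [Field K] (q : ℕ) (w : K → ℤ) (x : K) : ℝ :=
  if x = 0 then 0 else (q : ℝ) ^ (-(w x))

/-- The map `∇ : K → K`, `x ↦ π^{w(x)}·x` (and `∇0 = 0`). -/
noncomputable def nabla [Field K] (w : K → ℤ) (π : K) (x : K) : K :=
  if x = 0 then 0 else π ^ (w x) * x

/-- The operator `W`: `Wg(x) = g(π^{-w(x)/2}x)` if `w(x)` is even,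
`Wg(x) = g(π^{(-w(x)-1)/2}x)` if `w(x)` is odd, and `Wg(0) = g(0)`. -/
noncomputable def Wop [Field K] (w : K → ℤ) (π : K) (g : K → ℂ) : K → ℂ := fun x =>
  if x = 0 then g 0
  else if Even (w x) then g (π ^ (-(w x) / 2) * x)
  else g (π ^ ((-(w x) - 1) / 2) * x)

/-- The Fourier transform `ĝ(y) = ∫ g(x)ψ(xy) dμ(x)` on `K`. -/
noncomputable def fourierK [Field K] [MeasurableSpace K] (μ : Measure K) (ψ : K → ℂ)
    (g : K → ℂ) : K → ℂ :=
  fun y => ∫ x, g x * ψ (x * y) ∂μ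

/-- The `*`-transform `g* = (Wg)^ ∘ ∇`. -/
noncomputable def starT [Field K] [MeasurableSpace K] (μ : Measure K) (ψ : K → ℂ)
    (w : K → ℤ) (π : K) (g : K → ℂ) : K → ℂ :=
  fun y => fourierK μ ψ (Wop w π g) (nabla w π y)

/-- The Schwartz–Bruhat space of a nonarchimedean local field: locally constant,
compactly supported complex-valued functions. -/
def SBset (K : Type*) [TopologicalSpace K] : Set (K → ℂ) :=
  {g | IsLocallyConstant g ∧ HasCompactSupport g}

/-- `K` is a nonarchimedean local field with normalized valuation `w`, prime `π`, residue
cardinality `q`, and Haar measure `μ`: the topology is the valuation topology, the ring of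
integers is compact, and scaling by `c` multiplies the Haar measure by `q^{-w(c)}` (the
normalized module). -/
structure IsNALocalField [Field K] [TopologicalSpace K] [MeasurableSpace K]
    (μ : Measure K) (w : K → ℤ) (π : K) (q : ℕ) : Prop where
  one_lt_q : 1 < q
  pi_ne : π ≠ 0
  w_pi : w π = 1
  w_mul : ∀ x y : K, x ≠ 0 → y ≠ 0 → w (x * y) = w x + w y
  w_add : ∀ x y : K, x ≠ 0 → y ≠ 0 → x + y ≠ 0 → min (w x) (w y) ≤ w (x + y)
  nhds_basis : (nhds (0 : K)).HasBasis (fun _ : ℤ => True)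
    (fun n => {x : K | x = 0 ∨ n ≤ w x})
  compact_integers : IsCompact {x : K | x = 0 ∨ 0 ≤ w x}
  scaling : ∀ g : K → ℂ, Integrable g μ → ∀ c : K, c ≠ 0 →
    Integrable (fun x => g (c * x)) μ ∧
    (∫ x, g (c * x) ∂μ) = ((q : ℝ) ^ (w c)) • ∫ x, g x ∂μ

/-- `ψ` is a nontrivial continuous additive character of `K` (valued in the unit circle). -/
def IsAddCharacter [Field K] [TopologicalSpace K] (ψ : K → ℂ) : Prop :=
  (∀ x y : K, ψ (x + y) = ψ x * ψ y) ∧ (∀ x : K, ‖ψ x‖ = 1) ∧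
  Continuous ψ ∧ (∃ x : K, ψ x ≠ 1)

/-- `ψ` has conductor `d`: `ψ` is trivial on `π^d O_K` but nontrivial on `π^{d-1} O_K`. -/
def HasConductor [Field K] (w : K → ℤ) (ψ : K → ℂ) (d : ℤ) : Prop :=
  (∀ x : K, (x = 0 ∨ d ≤ w x) → ψ x = 1) ∧ (∃ x : K, x ≠ 0 ∧ d - 1 ≤ w x ∧ ψ x ≠ 1)

end NALF

/-! The substitution `x ↦ cx` with `c = π^{w(α)}α` does all the work: `c` has even valuation
`2w(α)`, so `W` turns `g(α·)` into `(Wg)(c·)`, while `∇(α⁻¹y) = c⁻¹∇y`; the change of variables in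
the Fourier integral then produces the factor `q^{w(c)} = |α|^{-2}`. -/

/-- `Int` division by `2` rounds down, so `-w(x)/2 = (-w(x)-1)/2` for odd `w(x)`: `W` needs no
case split, and the formula also covers `x = 0`. -/
lemma Wop_apply {K : Type*} [Field K] (w : K → ℤ) (π : K) (g : K → ℂ) (x : K) :
    Wop w π g x = g (π ^ (-(w x) / 2) * x) := by
  unfold Wop
  split_ifs with hx hev
  · simp [hx]
  · rfl
  · congr 3
    obtain ⟨k, hk⟩ := Int.not_even_iff_odd.mp hev
    omega

namespace IsNALocalField

variable {K : Type*} [Field K] [TopologicalSpace K] [MeasurableSpace K]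
  {μ : Measure K} {w : K → ℤ} {π : K} {q : ℕ}

lemma w_one (h : IsNALocalField μ w π q) : w 1 = 0 := by
  have := h.w_mul 1 1 one_ne_zero one_ne_zero
  rw [mul_one] at this
  omega

lemma w_inv (h : IsNALocalField μ w π q) {x : K} (hx : x ≠ 0) : w x⁻¹ = -w x := by
  have := h.w_mul x x⁻¹ hx (inv_ne_zero hx)
  rw [mul_inv_cancel₀ hx, h.w_one] at this
  omega

lemma w_zpow (h : IsNALocalField μ w π q) (k : ℤ) : w (π ^ k) = k := by
  have w_pow : ∀ n : ℕ, w (π ^ n) = n := by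
    intro n
    induction n with
    | zero => simpa using h.w_one
    | succ n ih =>
      rw [pow_succ, h.w_mul _ _ (pow_ne_zero _ h.pi_ne) h.pi_ne, ih, h.w_pi]
      push_cast
      rfl
  obtain ⟨n, rfl | rfl⟩ := Int.eq_nat_or_neg k
  · simpa using w_pow n
  · rw [zpow_neg, zpow_natCast, h.w_inv (pow_ne_zero _ h.pi_ne), w_pow]

lemma w_zpow_mul (h : IsNALocalField μ w π q) (k : ℤ) {x : K} (hx : x ≠ 0) :
    w (π ^ k * x) = k + w x := by
  rw [h.w_mul _ _ (zpow_ne_zero _ h.pi_ne) hx, h.w_zpow]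

lemma nabla_mul (h : IsNALocalField μ w π q) {a : K} (ha : a ≠ 0) (y : K) :
    nabla w π (a * y) = π ^ w a * a * nabla w π y := by
  by_cases hy : y = 0
  · simp [nabla, hy]
  rw [nabla, nabla, if_neg (mul_ne_zero ha hy), if_neg hy, h.w_mul _ _ ha hy,
    zpow_add₀ h.pi_ne]
  ring

lemma Wop_comp_mul (h : IsNALocalField μ w π q) (g : K → ℂ) {α : K} (hα : α ≠ 0) :
    Wop w π (fun x => g (α * x)) = fun x => Wop w π g (π ^ w α * α * x) := by
  funext x
  by_cases hx : x = 0
  · simp [Wop_apply, hx]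
  have hwx : w (π ^ w α * α * x) = 2 * w α + w x := by
    rw [mul_assoc, h.w_zpow_mul _ (mul_ne_zero hα hx), h.w_mul _ _ hα hx]
    ring
  rw [Wop_apply, Wop_apply, hwx, show -(2 * w α + w x) / 2 = -(w x) / 2 + -w α by omega,
    zpow_add₀ h.pi_ne, zpow_neg]
  have hπα : π ^ w α ≠ 0 := zpow_ne_zero _ h.pi_ne
  congr 1
  field_simp

/-- The scaling law of `μ` extends to non-integrable functions, where both integrals vanish:
if `f(c·)` were integrable, so would be `f = f(c·) ∘ (c⁻¹·)`. -/
lemma integral_comp_mul_left (h : IsNALocalField μ w π q) (f : K → ℂ) {c : K} (hc : c ≠ 0) :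
    ∫ x, f (c * x) ∂μ = ((q : ℝ) ^ w c) • ∫ x, f x ∂μ := by
  by_cases hf : Integrable f μ
  · exact (h.scaling f hf c hc).2
  have hfc : ¬ Integrable (fun x => f (c * x)) μ := fun hfc => hf <| by
    simpa [← mul_assoc, mul_inv_cancel₀ hc] using (h.scaling _ hfc c⁻¹ (inv_ne_zero hc)).1
  rw [integral_undef hf, integral_undef hfc, smul_zero]

lemma absv_zpow_neg_two (h : IsNALocalField μ w π q) {α : K} (hα : α ≠ 0) :
    absv q w α ^ (-2 : ℤ) = (q : ℝ) ^ w (π ^ w α * α) := by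
  rw [absv, if_neg hα, ← zpow_mul, h.w_zpow_mul _ hα]
  ring_nf

end IsNALocalField

theorem statement11_general
    {K : Type*} [Field K] [TopologicalSpace K] [MeasurableSpace K]
    (μ : Measure K)
    (w : K → ℤ) (π : K) (q : ℕ) (h : IsNALocalField μ w π q)
    (ψ : K → ℂ)
    (g : K → ℂ) (α : K) (hα : α ≠ 0) :
    starT μ ψ w π (fun x => g (α * x))
      = fun y => (((absv q w α ^ (-2 : ℤ)) : ℝ) : ℂ) * starT μ ψ w π g (α⁻¹ * y) := by
  funext y
  set c : K := π ^ w α * α with hc_def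
  have hc : c ≠ 0 := mul_ne_zero (zpow_ne_zero _ h.pi_ne) hα
  have nabla_inv_mul : nabla w π (α⁻¹ * y) = c⁻¹ * nabla w π y := by
    rw [h.nabla_mul (inv_ne_zero hα), h.w_inv hα, zpow_neg, ← mul_inv]
  simp only [starT, fourierK]
  rw [h.Wop_comp_mul g hα, nabla_inv_mul, h.absv_zpow_neg_two hα, ← hc_def,
    ← Complex.real_smul, ← h.integral_comp_mul_left _ hc]
  congr 1 with x
  congr 2
  field_simp

/-- For every Schwartz–Bruhat function `g` on `K` and every `α ∈ K^×`,
the `*`-transform satisfies `(x ↦ g(αx))* = |α|^{-2}·(x ↦ g*(α⁻¹x))`. -/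
theorem statement11
    {K : Type*} [Field K] [TopologicalSpace K] [IsTopologicalRing K]
    [LocallyCompactSpace K] [MeasurableSpace K] [BorelSpace K]
    (μ : Measure K) [μ.IsAddHaarMeasure]
    (w : K → ℤ) (π : K) (q : ℕ) (h : IsNALocalField μ w π q)
    (ψ : K → ℂ) (hψ : IsAddCharacter ψ)
    (g : K → ℂ) (hg : g ∈ SBset K) (α : K) (hα : α ≠ 0) :
    starT μ ψ w π (fun x => g (α * x))
      = fun y => (((absv q w α ^ (-2 : ℤ)) : ℝ) : ℂ) * starT μ ψ w π g (α⁻¹ * y) :=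
  statement11_general μ w π q h ψ g α hα
end
end

section
/- Let ω : ℝ^× → ℂ^× be a continuous homomorphism (quasi-character) with exponent σ, i.e. |ω(x)| = |x|^σ for all x ∈ ℝ^×. Let f and g be Schwartz functions on ℝ such that f* and g* are also Schwartz functions. Then for every s ∈ ℂ with 0 < Re(s) + σ < 2, the four zeta integrals ζ(f,ω,s), ζ(g,ω,s), ζ(f*,ω^{−1},2−s), ζ(g*,ω^{−1},2−s) converge absolutely and ζ(f,ω,s)·ζ(g*,ω^{−1},2−s) = ζ(f*,ω^{−1},2−s)·ζ(g,ω,s). -/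
noncomputable section

open MeasureTheory
open scoped Classical

/-- The map `∇ : ℝ → ℝ`, `x ↦ |x|·x`. -/
def nablaR (x : ℝ) : ℝ := |x| * x

/-- The inverse of `∇`: `x ↦ x·|x|^{-1/2}` for `x ≠ 0`, and `0 ↦ 0`. -/
noncomputable def nablaRInv (x : ℝ) : ℝ := if x = 0 then 0 else x / Real.sqrt |x|

/-- A nontrivial continuous unitary additive character of `ℝ`. -/
def IsAddCharacterR (ψ : ℝ → ℂ) : Prop :=
  (∀ x y : ℝ, ψ (x + y) = ψ x * ψ y) ∧ (∀ x : ℝ, ‖ψ x‖ = 1) ∧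
  Continuous ψ ∧ (∃ x : ℝ, ψ x ≠ 1)

/-- The Fourier transform `ĝ(y) = ∫ g(x)ψ(xy) dx` on `ℝ` with Lebesgue measure. -/
noncomputable def fourierR (ψ : ℝ → ℂ) (g : ℝ → ℂ) : ℝ → ℂ :=
  fun y => ∫ x : ℝ, g x * ψ (x * y)

/-- The archimedean `*`-transform `g* = (g ∘ ∇⁻¹)^ ∘ ∇`. -/
noncomputable def starR (ψ : ℝ → ℂ) (g : ℝ → ℂ) : ℝ → ℂ :=
  fun y => fourierR ψ (fun x => g (nablaRInv x)) (nablaR y)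

/-- The integrand `x ↦ h(x)ω(x)|x|^s` of the local zeta integral on `ℝ`, with respect to
the multiplicative Haar measure `d^×x = |x|⁻¹dx` (written against Lebesgue measure). -/
noncomputable def zetaIntegrandR (h ω : ℝ → ℂ) (s : ℂ) : ℝ → ℂ := fun x =>
  if x ≠ 0 then h x * ω x * (((|x| : ℝ) : ℂ) ^ s) * ((|x| : ℝ) : ℂ)⁻¹ else 0

/-!
Tate's argument. Substituting `y = x u` in the product of two zeta integrals and using that `ω`
is multiplicative, `ζ(f,ω,s) ζ(g*,ω⁻¹,2-s) = ∫ ω(u)⁻¹ |u|^(1-s) Φ_{f,g}(u) du` with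
`Φ_{f,g}(u) = ∫ f(x) g*(xu) |x| dx`, so it suffices that `Φ_{f,g}` is symmetric in `f, g`.
Since `∇` is multiplicative, the substitution `w = ∇x` (Jacobian `2|x|`) turns `Φ_{f,g}(u)` into
`½ ∫ F(w) Ĝ(w ∇u) dw` with `F = f ∘ ∇⁻¹`, `G = g ∘ ∇⁻¹`, and this is symmetric by Fubini.
On each half-line the zeta integrands are Mellin integrands of functions that are bounded near `0`
and `O(|x|⁻²)` at infinity, which gives absolute convergence for `0 < Re(s) + σ < 2`.
-/

open Set Filter Asymptotics Topology

lemma nablaR_mul (x y : ℝ) : nablaR (x * y) = nablaR x * nablaR y := by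
  simp only [nablaR, abs_mul]; ring

lemma nablaRInv_nablaR (x : ℝ) : nablaRInv (nablaR x) = x := by
  rcases eq_or_ne x 0 with rfl | hx
  · simp [nablaR, nablaRInv]
  · have hsq : Real.sqrt |nablaR x| = |x| := by
      rw [nablaR, abs_mul, abs_abs, ← sq, Real.sqrt_sq (abs_nonneg x)]
    rw [nablaRInv, if_neg (by simpa [nablaR] using hx), hsq, nablaR,
      mul_div_cancel_left₀ _ (abs_ne_zero.2 hx)]

lemma nablaR_surjective : Function.Surjective nablaR := fun x =>
  ⟨nablaRInv x, by
    rcases eq_or_ne x 0 with rfl | hx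
    · simp [nablaR, nablaRInv]
    · have hs : 0 < Real.sqrt |x| := Real.sqrt_pos.2 (abs_pos.2 hx)
      rw [nablaRInv, if_neg hx, nablaR, abs_div, abs_of_pos hs, div_mul_div_comm,
        Real.mul_self_sqrt (abs_nonneg x), mul_comm, mul_div_cancel_right₀ _ (abs_ne_zero.2 hx)]⟩

lemma hasDerivAt_nablaR (x : ℝ) : HasDerivAt nablaR (2 * |x|) x := by
  rcases eq_or_ne x 0 with rfl | hx
  · rw [hasDerivAt_iff_isLittleO_nhds_zero]
    have habs : (fun h : ℝ => |h|) =o[𝓝 0] (fun _ => (1 : ℝ)) :=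
      (isLittleO_one_iff ℝ).2 (continuous_abs.tendsto' 0 0 abs_zero)
    simpa [nablaR] using habs.mul_isBigO (isBigO_refl (fun h : ℝ => h) _)
  · have h := (hasDerivAt_abs hx).mul (hasDerivAt_id x)
    rwa [id_eq, mul_one, sign_mul_self, ← two_mul] at h

lemma integral_comp_nablaR {E : Type*} [NormedAddCommGroup E] [NormedSpace ℝ E] (φ : ℝ → E) :
    ∫ w, φ w = ∫ x, (2 * |x|) • φ (nablaR x) := by
  have h := integral_image_eq_integral_abs_deriv_smul MeasurableSet.univ
    (fun x _ => (hasDerivAt_nablaR x).hasDerivWithinAt)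
    (Function.LeftInverse.injective nablaRInv_nablaR).injOn φ
  simpa [nablaR_surjective.range_eq] using h

lemma integrable_comp_nablaRInv_iff {E : Type*} [NormedAddCommGroup E] [NormedSpace ℝ E]
    (f : ℝ → E) : Integrable (f ∘ nablaRInv) ↔ Integrable (fun x => (2 * |x|) • f x) := by
  have h := integrableOn_image_iff_integrableOn_abs_deriv_smul MeasurableSet.univ
    (fun x _ => (hasDerivAt_nablaR x).hasDerivWithinAt)
    (Function.LeftInverse.injective nablaRInv_nablaR).injOn (f ∘ nablaRInv)
  simpa [nablaR_surjective.range_eq, nablaRInv_nablaR] using h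

lemma SchwartzMap.integrable_comp_nablaRInv (f : SchwartzMap ℝ ℂ) :
    Integrable (f ∘ nablaRInv) := by
  rw [integrable_comp_nablaRInv_iff]
  refine ((f.integrable_pow_mul volume 1).const_mul 2).mono'
    (by fun_prop : Continuous fun x => (2 * |x|) • f x).aestronglyMeasurable
    (ae_of_all _ fun x => ?_)
  simp [mul_assoc]

lemma abs_smul_integral_comp_mul_left {E : Type*} [NormedAddCommGroup E] [NormedSpace ℝ E]
    (β : ℝ → E) {x : ℝ} (hx : x ≠ 0) : |x| • ∫ u, β (x * u) = ∫ u, β u := by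
  rw [Measure.integral_comp_mul_left, smul_smul, abs_inv, mul_inv_cancel₀ (abs_ne_zero.2 hx),
    one_smul]

lemma integral_mul_fourierR_comm {ψ : ℝ → ℂ} (hψc : Continuous ψ) {C : ℝ}
    (hψb : ∀ x, ‖ψ x‖ ≤ C) {F G : ℝ → ℂ} (hF : Integrable F) (hG : Integrable G) :
    ∫ w, F w * fourierR ψ G w = ∫ t, G t * fourierR ψ F t := by
  have hint : Integrable (fun p : ℝ × ℝ => F p.1 * G p.2 * ψ (p.2 * p.1)) (volume.prod volume) :=
    (hF.mul_prod hG).mul_bdd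
      (by fun_prop : Continuous fun p : ℝ × ℝ => ψ (p.2 * p.1)).aestronglyMeasurable
      (ae_of_all _ fun p => hψb _)
  calc ∫ w, F w * fourierR ψ G w = ∫ w, ∫ t, F w * G t * ψ (t * w) := by
        simp_rw [fourierR, ← integral_const_mul, mul_assoc]
    _ = ∫ t, ∫ w, F w * G t * ψ (t * w) := integral_integral_swap hint
    _ = ∫ t, G t * fourierR ψ F t := by
        simp_rw [fourierR, ← integral_const_mul]
        congr 1; ext t; congr 1; ext w
        rw [mul_comm w t]; ring

lemma integral_mul_starR_comp_mul_comm {ψ : ℝ → ℂ} (hψc : Continuous ψ) {C : ℝ}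
    (hψb : ∀ x, ‖ψ x‖ ≤ C) {f g : ℝ → ℂ} (hf : Integrable (f ∘ nablaRInv))
    (hg : Integrable (g ∘ nablaRInv)) (u : ℝ) :
    ∫ x, f x * starR ψ g (x * u) * |x| = ∫ x, g x * starR ψ f (x * u) * |x| := by
  set ψu : ℝ → ℂ := fun y => ψ (y * nablaR u)
  have hsubst : ∀ h k : ℝ → ℂ, ∫ x, h x * starR ψ k (x * u) * |x|
      = 2⁻¹ * ∫ w, (h ∘ nablaRInv) w * fourierR ψu (k ∘ nablaRInv) w := by
    intro h k
    rw [integral_comp_nablaR (fun w => (h ∘ nablaRInv) w * _), ← integral_const_mul]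
    congr 1; ext x
    simp only [ψu, starR, fourierR, nablaR_mul, Function.comp_apply, nablaRInv_nablaR,
      Complex.real_smul, mul_assoc]
    push_cast
    ring
  rw [hsubst f g, hsubst g f,
    integral_mul_fourierR_comm (by fun_prop) (fun y => hψb _) hf hg]

lemma integral_mul_integral_eq_integral_integral_comp_mul {α β : ℝ → ℂ} (hα : Integrable α)
    (hβ : Integrable β) (hβm : Measurable β) :
    (∫ x, α x) * (∫ y, β y) = ∫ u, ∫ x, α x * (|x| * β (x * u)) := by
  have hinner : ∀ x : ℝ, x ≠ 0 → ∫ u, α x * (|x| * β (x * u)) = α x * ∫ y, β y := by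
    intro x hx
    rw [integral_const_mul, integral_const_mul, ← Complex.real_smul,
      abs_smul_integral_comp_mul_left β hx]
  have hKm : AEStronglyMeasurable (Function.uncurry fun x u => α x * (|x| * β (x * u)))
      (volume.prod volume) :=
    hα.aestronglyMeasurable.comp_fst.mul (by fun_prop :
      Measurable fun p : ℝ × ℝ => ((|p.1| : ℝ) : ℂ) * β (p.1 * p.2)).aestronglyMeasurable
  have hK : Integrable (Function.uncurry fun x u => α x * (|x| * β (x * u)))
      (volume.prod volume) := by
    refine (integrable_prod_iff hKm).2 ⟨?_, ?_⟩ <;> simp only [Function.uncurry_apply_pair]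
    · filter_upwards [volume.ae_ne 0] with x hx
      exact ((hβ.comp_mul_left' hx).const_mul _).const_mul _
    · refine (hα.norm.mul_const (∫ y, ‖β y‖)).congr ?_
      filter_upwards [volume.ae_ne 0] with x hx
      simp_rw [norm_mul, Complex.norm_real, Real.norm_eq_abs, abs_abs]
      rw [integral_const_mul, integral_const_mul, ← smul_eq_mul (a := |x|),
        abs_smul_integral_comp_mul_left (fun y => ‖β y‖) hx]
  calc (∫ x, α x) * (∫ y, β y) = ∫ x, α x * ∫ y, β y := (integral_mul_const _ _).symm
    _ = ∫ x, ∫ u, α x * (|x| * β (x * u)) := by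
        refine integral_congr_ae ?_
        filter_upwards [volume.ae_ne 0] with x hx using (hinner x hx).symm
    _ = ∫ u, ∫ x, α x * (|x| * β (x * u)) := integral_integral_swap hK

lemma measurable_zetaIntegrandR {h ω : ℝ → ℂ} (hh : Continuous h)
    (hω : ContinuousOn ω {x | x ≠ 0}) (s : ℂ) : Measurable (zetaIntegrandR h ω s) := by
  refine measurable_of_continuousOn_compl_singleton 0
    (ContinuousOn.congr (f := fun x => h x * ω x * ((|x| : ℝ) : ℂ) ^ s * ((|x| : ℝ) : ℂ)⁻¹)
      ?_ fun x hx => if_pos hx)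
  intro x (hx : x ≠ 0)
  have hcpow : ContinuousAt (fun y : ℝ => ((|y| : ℝ) : ℂ) ^ s) x :=
    (Complex.continuousAt_ofReal_cpow_const _ s (Or.inr (abs_ne_zero.2 hx))).comp
      continuous_abs.continuousAt
  have hinv : ContinuousAt (fun y : ℝ => ((|y| : ℝ) : ℂ)⁻¹) x :=
    (by fun_prop : Continuous fun y : ℝ => ((|y| : ℝ) : ℂ)).continuousAt.inv₀
      (by exact_mod_cast abs_ne_zero.2 hx)
  exact ((hh.continuousWithinAt.mul (hω x hx)).mul hcpow.continuousWithinAt).mul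
    hinv.continuousWithinAt

lemma norm_zetaIntegrandR {h ω : ℝ → ℂ} {σ : ℝ} (hω : ∀ x : ℝ, x ≠ 0 → ‖ω x‖ = |x| ^ σ)
    (s : ℂ) {x : ℝ} (hx : x ≠ 0) :
    ‖zetaIntegrandR h ω s x‖ = |x| ^ (s.re + σ - 1) * ‖h x‖ := by
  have hx' : 0 < |x| := abs_pos.2 hx
  rw [zetaIntegrandR, if_pos hx, norm_mul, norm_mul, norm_mul, norm_inv, hω x hx,
    Complex.norm_cpow_eq_rpow_re_of_pos hx', Complex.norm_real, Real.norm_of_nonneg hx'.le,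
    Real.rpow_sub hx', Real.rpow_add hx', Real.rpow_one]
  field_simp

lemma integrableOn_Ioi_rpow_mul_norm {h : ℝ → ℂ} (hh : Continuous h) {b : ℝ}
    (hdecay : h =O[atTop] (· ^ (-b))) {a : ℝ} (ha : 0 < a) (hab : a < b) :
    IntegrableOn (fun x => x ^ (a - 1) * ‖h x‖) (Ioi 0) := by
  refine mellin_convergent_of_isBigO_scalar (b := 0) (hh.norm.continuousOn.locallyIntegrableOn
    measurableSet_Ioi) hdecay.norm_left hab ?_ (by simpa using ha)
  simpa using (hh.norm.continuousAt (x := 0)).isBigO_one ℝ |>.mono nhdsWithin_le_nhds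

lemma integrable_of_integrableOn_Ioi_of_integrableOn_Ioi_comp_neg {E : Type*}
    [NormedAddCommGroup E] {F : ℝ → E} (hpos : IntegrableOn F (Ioi 0))
    (hneg : IntegrableOn (fun x => F (-x)) (Ioi 0)) : Integrable F := by
  rw [← integrableOn_univ, ← Iic_union_Ioi (a := (0 : ℝ)), integrableOn_union,
    integrableOn_Iic_iff_integrableOn_Iio]
  refine ⟨?_, hpos⟩
  rw [← (Measure.measurePreserving_neg (volume : Measure ℝ)).integrableOn_comp_preimage
    (Homeomorph.neg ℝ).measurableEmbedding, neg_preimage, neg_Iio, neg_zero]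
  exact hneg

lemma integrable_abs_rpow_mul_norm {h : ℝ → ℂ} (hh : Continuous h) {b : ℝ}
    (hdecay : h =O[cocompact ℝ] (‖·‖ ^ (-b))) {a : ℝ} (ha : 0 < a) (hab : a < b) :
    Integrable (fun x => |x| ^ (a - 1) * ‖h x‖) := by
  have hnorm : (fun x : ℝ => ‖x‖ ^ (-b)) =ᶠ[atTop] (· ^ (-b)) := by
    filter_upwards [eventually_ge_atTop 0] with x hx
    rw [Real.norm_of_nonneg hx]
  refine integrable_of_integrableOn_Ioi_of_integrableOn_Ioi_comp_neg ?_ ?_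
  · refine (integrableOn_Ioi_rpow_mul_norm hh
      ((hdecay.mono atTop_le_cocompact).trans_eventuallyEq hnorm) ha hab).congr_fun
      (fun x (hx : 0 < x) => by rw [abs_of_pos hx]) measurableSet_Ioi
  · have hdecay_neg : (fun x => h (-x)) =O[atTop] (· ^ (-b)) := by
      refine (hdecay.comp_tendsto (tendsto_neg_atTop_atBot.mono_right atBot_le_cocompact))
        |>.trans_eventuallyEq ?_
      simpa [Function.comp_def] using hnorm
    refine (integrableOn_Ioi_rpow_mul_norm (hh.comp continuous_neg) hdecay_neg ha hab).congr_fun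
      (fun x (hx : 0 < x) => by rw [abs_neg, abs_of_pos hx]; rfl) measurableSet_Ioi

lemma integrable_zetaIntegrandR {h ω : ℝ → ℂ} {σ : ℝ} {s : ℂ} (hh : Continuous h) {b : ℝ}
    (hdecay : h =O[cocompact ℝ] (‖·‖ ^ (-b))) (hω_cont : ContinuousOn ω {x | x ≠ 0})
    (hω_exp : ∀ x : ℝ, x ≠ 0 → ‖ω x‖ = |x| ^ σ) (hpos : 0 < s.re + σ) (hlt : s.re + σ < b) :
    Integrable (zetaIntegrandR h ω s) := by
  refine (integrable_abs_rpow_mul_norm hh hdecay hpos hlt).mono'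
    (measurable_zetaIntegrandR hh hω_cont s).aestronglyMeasurable ?_
  filter_upwards [volume.ae_ne 0] with x hx
  exact (norm_zetaIntegrandR hω_exp s hx).le

lemma zetaIntegrandR_mul_abs_mul_zetaIntegrandR_inv {ω : ℝ → ℂ}
    (hω_hom : ∀ x y : ℝ, x ≠ 0 → y ≠ 0 → ω (x * y) = ω x * ω y)
    (hω_ne : ∀ x : ℝ, x ≠ 0 → ω x ≠ 0) (s : ℂ) (h k : ℝ → ℂ) {u : ℝ} (hu : u ≠ 0) (x : ℝ) :
    zetaIntegrandR h ω s x * (|x| * zetaIntegrandR k (fun y => (ω y)⁻¹) (2 - s) (x * u))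
      = (ω u)⁻¹ * ((|u| : ℝ) : ℂ) ^ (2 - s) * ((|u| : ℝ) : ℂ)⁻¹ * (h x * k (x * u) * |x|) := by
  rcases eq_or_ne x 0 with rfl | hx
  · simp [zetaIntegrandR]
  have hx0 : ((|x| : ℝ) : ℂ) ≠ 0 := by exact_mod_cast abs_ne_zero.2 hx
  rw [zetaIntegrandR, zetaIntegrandR, if_pos hx, if_pos (mul_ne_zero hx hu), hω_hom x u hx hu,
    abs_mul, Complex.ofReal_mul, Complex.mul_cpow_ofReal_nonneg (abs_nonneg x) (abs_nonneg u),
    Complex.cpow_sub _ _ hx0, Complex.cpow_two]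
  have hxs : ((|x| : ℝ) : ℂ) ^ s ≠ 0 := Complex.cpow_ne_zero_iff.2 (Or.inl hx0)
  field_simp [hxs, hω_ne x hx, hω_ne u hu]

/-- Let `ω` be a quasi-character of `ℝ^×` of exponent `σ`, and let `f, g`
be Schwartz functions whose `*`-transforms are also Schwartz.  Then for every `s` with
`0 < Re(s) + σ < 2` the four zeta integrals converge absolutely and
`ζ(f,ω,s)·ζ(g*,ω⁻¹,2-s) = ζ(f*,ω⁻¹,2-s)·ζ(g,ω,s)`. -/
theorem statement17
    (ψ : ℝ → ℂ) (hψ : IsAddCharacterR ψ)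
    (ω : ℝ → ℂ) (σ : ℝ)
    (hω_hom : ∀ x y : ℝ, x ≠ 0 → y ≠ 0 → ω (x * y) = ω x * ω y)
    (hω_ne : ∀ x : ℝ, x ≠ 0 → ω x ≠ 0)
    (hω_cont : ContinuousOn ω {x : ℝ | x ≠ 0})
    (hω_exp : ∀ x : ℝ, x ≠ 0 → ‖ω x‖ = |x| ^ σ)
    (f g : SchwartzMap ℝ ℂ)
    (hfstar : ∃ f' : SchwartzMap ℝ ℂ, ⇑f' = starR ψ ⇑f)
    (hgstar : ∃ g' : SchwartzMap ℝ ℂ, ⇑g' = starR ψ ⇑g)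
    (s : ℂ) (hs₁ : 0 < s.re + σ) (hs₂ : s.re + σ < 2) :
    Integrable (zetaIntegrandR (⇑f) ω s) ∧
    Integrable (zetaIntegrandR (⇑g) ω s) ∧
    Integrable (zetaIntegrandR (starR ψ ⇑f) (fun x => (ω x)⁻¹) (2 - s)) ∧
    Integrable (zetaIntegrandR (starR ψ ⇑g) (fun x => (ω x)⁻¹) (2 - s)) ∧
    (∫ x : ℝ, zetaIntegrandR (⇑f) ω s x) *
        (∫ x : ℝ, zetaIntegrandR (starR ψ ⇑g) (fun x => (ω x)⁻¹) (2 - s) x)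
      = (∫ x : ℝ, zetaIntegrandR (starR ψ ⇑f) (fun x => (ω x)⁻¹) (2 - s) x) *
        (∫ x : ℝ, zetaIntegrandR (⇑g) ω s x) := by
  obtain ⟨-, hψ1, hψc, -⟩ := hψ
  obtain ⟨f', hf'⟩ := hfstar
  obtain ⟨g', hg'⟩ := hgstar
  rw [← hf', ← hg']
  have hω_inv_cont : ContinuousOn (fun x => (ω x)⁻¹) {x | x ≠ 0} := hω_cont.inv₀ hω_ne
  have hω_inv_exp : ∀ x : ℝ, x ≠ 0 → ‖(ω x)⁻¹‖ = |x| ^ (-σ) := fun x hx => by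
    rw [norm_inv, hω_exp x hx, Real.rpow_neg (abs_nonneg x)]
  have hζ (h : SchwartzMap ℝ ℂ) : Integrable (zetaIntegrandR h ω s) :=
    integrable_zetaIntegrandR h.continuous (h.isBigO_cocompact_rpow (-2)) hω_cont hω_exp hs₁ hs₂
  have hζ_inv (h : SchwartzMap ℝ ℂ) :
      Integrable (zetaIntegrandR h (fun x => (ω x)⁻¹) (2 - s)) := by
    refine integrable_zetaIntegrandR h.continuous (h.isBigO_cocompact_rpow (-2)) hω_inv_cont
      hω_inv_exp ?_ ?_ <;> simp only [Complex.sub_re, Complex.re_ofNat] <;> linarith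
  refine ⟨hζ f, hζ g, hζ_inv f', hζ_inv g', ?_⟩
  have hmeas (h : SchwartzMap ℝ ℂ) : Measurable (zetaIntegrandR h (fun x => (ω x)⁻¹) (2 - s)) :=
    measurable_zetaIntegrandR h.continuous hω_inv_cont (2 - s)
  rw [integral_mul_integral_eq_integral_integral_comp_mul (hζ f) (hζ_inv g') (hmeas g'), mul_comm,
    integral_mul_integral_eq_integral_integral_comp_mul (hζ g) (hζ_inv f') (hmeas f')]
  refine integral_congr_ae ?_
  filter_upwards [volume.ae_ne 0] with u hu
  simp_rw [zetaIntegrandR_mul_abs_mul_zetaIntegrandR_inv hω_hom hω_ne s _ _ hu, integral_const_mul,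
    hf', hg', integral_mul_starR_comp_mul_comm hψc (fun x => (hψ1 x).le) f.integrable_comp_nablaRInv
      g.integrable_comp_nablaRInv u]
end
end

section
/- Let Ω be a set and 𝒟 a d-class of subsets of Ω. Then the collection of all ddd sets is a ring of sets: the difference of two ddd sets is a ddd set and the union of two ddd sets is a ddd set. Moreover, this collection is exactly the ring of sets generated by 𝒟, i.e. the smallest collection of subsets of Ω containing 𝒟 that is closed under set differences and finite unions. -/
/-- A collection `𝒟` of subsets of `Ω` is a *d-class* if it contains the empty set and,
whenever `A, B ∈ 𝒟` have nonempty intersection, both `A ∩ B` and `A ∪ B` belong to `𝒟`. -/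
def IsDClass {Ω : Type*} (𝒟 : Set (Set Ω)) : Prop :=
  ∅ ∈ 𝒟 ∧ ∀ A ∈ 𝒟, ∀ B ∈ 𝒟, (A ∩ B).Nonempty → A ∩ B ∈ 𝒟 ∧ A ∪ B ∈ 𝒟

/-- A *dd set*: a set of the form `A \ (A₁ ⊔ … ⊔ Aₙ)` with `A, Aᵢ` d sets, the `Aᵢ`
pairwise disjoint and contained in `A`. -/
def IsDD {Ω : Type*} (𝒟 : Set (Set Ω)) (X : Set Ω) : Prop :=
  ∃ (A : Set Ω) (n : ℕ) (B : Fin n → Set Ω),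
    A ∈ 𝒟 ∧ (∀ i, B i ∈ 𝒟) ∧ (∀ i, B i ⊆ A) ∧
    Pairwise (Function.onFun Disjoint B) ∧ X = A \ ⋃ i, B i

/-- A *ddd set*: a finite disjoint union of dd sets. -/
def IsDDD {Ω : Type*} (𝒟 : Set (Set Ω)) (X : Set Ω) : Prop :=
  ∃ (n : ℕ) (C : Fin n → Set Ω),
    (∀ i, IsDD 𝒟 (C i)) ∧ Pairwise (Function.onFun Disjoint C) ∧ X = ⋃ i, C i

/-- A *ring of sets*: a collection of subsets closed under differences and finite
(binary) unions. -/
def IsSetRing {Ω : Type*} (R : Set (Set Ω)) : Prop :=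
  (∀ A ∈ R, ∀ B ∈ R, A \ B ∈ R) ∧ (∀ A ∈ R, ∀ B ∈ R, A ∪ B ∈ R)

namespace S19

open Set

variable {Ω : Type*} {𝒟 : Set (Set Ω)}

/-- Finset version of dd. -/
def DD (𝒟 : Set (Set Ω)) (X : Set Ω) : Prop :=
  ∃ A ∈ 𝒟, ∃ T : Finset (Set Ω), (∀ B ∈ T, B ∈ 𝒟) ∧ (∀ B ∈ T, B ⊆ A) ∧
    (↑T : Set (Set Ω)).Pairwise Disjoint ∧ X = A \ ⋃₀ ↑T

/-- Finset version of ddd. -/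
def DDD (𝒟 : Set (Set Ω)) (X : Set Ω) : Prop :=
  ∃ T : Finset (Set Ω), (∀ C ∈ T, DD 𝒟 C) ∧
    (↑T : Set (Set Ω)).Pairwise Disjoint ∧ X = ⋃₀ ↑T

lemma finset_to_fin (T : Finset (Set Ω)) :
    ∃ (n : ℕ) (B : Fin n → Set Ω), (∀ i, B i ∈ T) ∧ Function.Injective B ∧
      (⋃ i, B i) = ⋃₀ ↑T := by
  refine ⟨T.card, fun i => ((T.equivFin.symm i : T) : Set Ω), fun i => (T.equivFin.symm i).2,
    ?_, ?_⟩
  · intro i j hij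
    have := T.equivFin.symm.injective (Subtype.ext hij)
    exact this
  · ext x
    simp only [mem_iUnion, Set.mem_sUnion, Finset.mem_coe]
    constructor
    · rintro ⟨i, hi⟩
      exact ⟨_, (T.equivFin.symm i).2, hi⟩
    · rintro ⟨C, hC, hx⟩
      refine ⟨T.equivFin ⟨C, hC⟩, ?_⟩
      simpa using hx

lemma fin_to_finset {n : ℕ} (B : Fin n → Set Ω) :
    ∃ T : Finset (Set Ω), (∀ C ∈ T, ∃ i, B i = C) ∧ (∀ i, B i ∈ T) ∧
      ⋃₀ (↑T : Set (Set Ω)) = ⋃ i, B i := by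
  classical
  refine ⟨Finset.image B Finset.univ, ?_, ?_, ?_⟩
  · intro C hC
    simpa using (Finset.mem_image.mp hC).imp fun i hi => hi.2
  · intro i; exact Finset.mem_image_of_mem B (Finset.mem_univ i)
  · ext x
    simp [Set.mem_sUnion]

lemma isDD_iff {X : Set Ω} : IsDD 𝒟 X ↔ DD 𝒟 X := by
  constructor
  · rintro ⟨A, n, B, hA, hBD, hBA, hdisj, rfl⟩
    obtain ⟨T, hTrep, hTmem, hTU⟩ := fin_to_finset B
    refine ⟨A, hA, T, ?_, ?_, ?_, by rw [hTU]⟩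
    · intro C hC; obtain ⟨i, rfl⟩ := hTrep C hC; exact hBD i
    · intro C hC; obtain ⟨i, rfl⟩ := hTrep C hC; exact hBA i
    · intro C hC C' hC' hne
      obtain ⟨i, rfl⟩ := hTrep C hC
      obtain ⟨j, rfl⟩ := hTrep C' hC'
      exact hdisj (fun hij => hne (by rw [hij]))
  · rintro ⟨A, hA, T, hTD, hTA, hdisj, rfl⟩
    obtain ⟨n, B, hBmem, hBinj, hBU⟩ := finset_to_fin T
    refine ⟨A, n, B, hA, fun i => hTD _ (hBmem i), fun i => hTA _ (hBmem i), ?_, by rw [hBU]⟩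
    intro i j hij
    exact hdisj (hBmem i) (hBmem j) (fun h => hij (hBinj h))

lemma isDDD_iff {X : Set Ω} : IsDDD 𝒟 X ↔ DDD 𝒟 X := by
  constructor
  · rintro ⟨n, C, hCdd, hdisj, rfl⟩
    obtain ⟨T, hTrep, hTmem, hTU⟩ := fin_to_finset C
    refine ⟨T, ?_, ?_, by rw [hTU]⟩
    · intro c hc; obtain ⟨i, rfl⟩ := hTrep c hc; exact isDD_iff.mp (hCdd i)
    · intro c hc c' hc' hne
      obtain ⟨i, rfl⟩ := hTrep c hc
      obtain ⟨j, rfl⟩ := hTrep c' hc'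
      exact hdisj (fun hij => hne (by rw [hij]))
  · rintro ⟨T, hTdd, hdisj, rfl⟩
    obtain ⟨n, B, hBmem, hBinj, hBU⟩ := finset_to_fin T
    refine ⟨n, B, fun i => isDD_iff.mpr (hTdd _ (hBmem i)), ?_, by rw [hBU]⟩
    intro i j hij
    exact hdisj (hBmem i) (hBmem j) (fun h => hij (hBinj h))

lemma inter_mem (h : IsDClass 𝒟) {A B : Set Ω} (hA : A ∈ 𝒟) (hB : B ∈ 𝒟) : A ∩ B ∈ 𝒟 := by
  rcases (A ∩ B).eq_empty_or_nonempty with he | hne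
  · rw [he]; exact h.1
  · exact (h.2 A hA B hB hne).1

lemma disjointify_aux (h : IsDClass 𝒟) :
    ∀ (n : ℕ) (S : Finset (Set Ω)), S.card ≤ n → (∀ A ∈ S, A ∈ 𝒟) →
      ∃ T : Finset (Set Ω), (∀ A ∈ T, A ∈ 𝒟) ∧ (↑T : Set (Set Ω)).Pairwise Disjoint ∧
        ⋃₀ (↑T : Set (Set Ω)) = ⋃₀ ↑S := by
  intro n
  induction n with
  | zero =>
    intro S hcard _
    have : S = ∅ := Finset.card_eq_zero.mp (Nat.le_zero.mp hcard)
    subst this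
    exact ⟨∅, by simp, by simp, rfl⟩
  | succ n ih =>
    intro S hcard hS
    by_cases hd : (↑S : Set (Set Ω)).Pairwise Disjoint
    · exact ⟨S, hS, hd, rfl⟩
    · simp only [Set.Pairwise, not_forall, Finset.mem_coe] at hd
      obtain ⟨a, ha, b, hb, hab, hnd⟩ := hd
      have hne : (a ∩ b).Nonempty := Set.not_disjoint_iff_nonempty_inter.mp hnd
      have hu : a ∪ b ∈ 𝒟 := (h.2 a (hS a ha) b (hS b hb) hne).2
      classical
      set S' := insert (a ∪ b) ((S.erase a).erase b) with hS'def
      have hbe : b ∈ S.erase a := Finset.mem_erase.mpr ⟨fun hh => hab hh.symm, hb⟩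
      have hcard' : S'.card ≤ n := by
        have h1 : S'.card ≤ ((S.erase a).erase b).card + 1 := Finset.card_insert_le _ _
        have h2 : ((S.erase a).erase b).card = (S.erase a).card - 1 :=
          Finset.card_erase_of_mem hbe
        have h3 : (S.erase a).card = S.card - 1 := Finset.card_erase_of_mem ha
        have h4 : 2 ≤ S.card := Finset.one_lt_card.mpr ⟨a, ha, b, hb, hab⟩
        omega
      have hS'mem : ∀ A ∈ S', A ∈ 𝒟 := by
        intro A hA
        rcases Finset.mem_insert.mp hA with rfl | hA
        · exact hu
        · exact hS A (Finset.mem_of_mem_erase (Finset.mem_of_mem_erase hA))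
      have hUeq : ⋃₀ (↑S' : Set (Set Ω)) = ⋃₀ ↑S := by
        ext x
        simp only [Set.mem_sUnion, Finset.mem_coe, hS'def, Finset.mem_insert,
          Finset.mem_erase]
        constructor
        · rintro ⟨t, rfl | ⟨htb, hta, ht⟩, hx⟩
          · rcases hx with hx | hx
            exacts [⟨a, ha, hx⟩, ⟨b, hb, hx⟩]
          · exact ⟨t, ht, hx⟩
        · rintro ⟨t, ht, hx⟩
          by_cases hta : t = a
          · exact ⟨a ∪ b, Or.inl rfl, Or.inl (hta ▸ hx)⟩
          by_cases htb : t = b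
          · exact ⟨a ∪ b, Or.inl rfl, Or.inr (htb ▸ hx)⟩
          · exact ⟨t, Or.inr ⟨htb, hta, ht⟩, hx⟩
      obtain ⟨T, hT1, hT2, hT3⟩ := ih S' hcard' hS'mem
      exact ⟨T, hT1, hT2, hT3.trans hUeq⟩

lemma disjointify (h : IsDClass 𝒟) (S : Finset (Set Ω)) (hS : ∀ A ∈ S, A ∈ 𝒟) :
    ∃ T : Finset (Set Ω), (∀ A ∈ T, A ∈ 𝒟) ∧ (↑T : Set (Set Ω)).Pairwise Disjoint ∧
      ⋃₀ (↑T : Set (Set Ω)) = ⋃₀ ↑S :=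
  disjointify_aux h S.card S le_rfl hS

lemma ddd_empty : DDD 𝒟 ∅ := ⟨∅, by simp, by simp, by simp⟩

lemma dd_ddd {X : Set Ω} (hX : DD 𝒟 X) : DDD 𝒟 X :=
  ⟨{X}, by simpa using hX, by simp, by simp⟩

/-- The difference of two dd sets is a ddd set. -/
lemma dd_diff (h : IsDClass 𝒟) {X Y : Set Ω} (hX : DD 𝒟 X) (hY : DD 𝒟 Y) :
    DDD 𝒟 (X \ Y) := by
  classical
  obtain ⟨A, hA, TB, hTBD, hTBA, hTBdisj, rfl⟩ := hX
  obtain ⟨C, hC, TD, hTDD, hTDC, hTDdisj, rfl⟩ := hY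
  set X : Set Ω := A \ ⋃₀ ↑TB with hXdef
  -- piece 2 : X \ C is a dd set
  have hS0mem : ∀ B ∈ insert (C ∩ A) TB, B ∈ 𝒟 := by
    intro B hB
    rcases Finset.mem_insert.mp hB with rfl | hB
    · exact inter_mem h hC hA
    · exact hTBD B hB
  obtain ⟨T2, hT2D, hT2disj, hT2U⟩ := disjointify h (insert (C ∩ A) TB) hS0mem
  have hS0sub : ⋃₀ (↑(insert (C ∩ A) TB) : Set (Set Ω)) ⊆ A := by
    rintro x ⟨t, ht, hxt⟩
    rcases Finset.mem_insert.mp ht with rfl | ht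
    · exact hxt.2
    · exact hTBA t ht hxt
  have hpiece2 : DD 𝒟 (X \ C) := by
    refine ⟨A, hA, T2, hT2D, ?_, hT2disj, ?_⟩
    · intro B hB
      have hsub : B ⊆ ⋃₀ (↑T2 : Set (Set Ω)) := fun x hx => ⟨B, hB, hx⟩
      rw [hT2U] at hsub
      exact hsub.trans hS0sub
    · rw [hT2U, Finset.coe_insert, Set.sUnion_insert]
      ext x
      simp only [hXdef, Set.mem_diff, Set.mem_union, Set.mem_inter_iff, not_or]
      tauto
  -- piece 1 : X ∩ D is a dd set for each D ∈ TD
  have hpiece1 : ∀ D ∈ TD, DD 𝒟 (X ∩ D) := by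
    intro D hD
    refine ⟨A ∩ D, inter_mem h hA (hTDD D hD), TB.image (fun B => B ∩ D), ?_, ?_, ?_, ?_⟩
    · intro B hB
      obtain ⟨B', hB', rfl⟩ := Finset.mem_image.mp hB
      exact inter_mem h (hTBD B' hB') (hTDD D hD)
    · intro B hB
      obtain ⟨B', hB', rfl⟩ := Finset.mem_image.mp hB
      exact Set.inter_subset_inter (hTBA B' hB') subset_rfl
    · intro u hu v hv huv
      obtain ⟨B, hB, rfl⟩ := Finset.mem_image.mp hu
      obtain ⟨B', hB', rfl⟩ := Finset.mem_image.mp hv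
      have hne : B ≠ B' := fun hh => huv (by rw [hh])
      exact (hTBdisj hB hB' hne).mono Set.inter_subset_left Set.inter_subset_left
    · ext x
      simp only [hXdef, Finset.coe_image, Set.sUnion_image, Set.mem_inter_iff,
        Set.mem_diff, Set.mem_sUnion, Finset.mem_coe, Set.mem_iUnion, not_exists]
      tauto
  -- assemble
  refine ⟨insert (X \ C) (TD.image (fun D => X ∩ D)), ?_, ?_, ?_⟩
  · intro u hu
    rcases Finset.mem_insert.mp hu with rfl | hu
    · exact hpiece2
    · obtain ⟨D, hD, rfl⟩ := Finset.mem_image.mp hu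
      exact hpiece1 D hD
  · intro u hu v hv huv
    rcases Finset.mem_insert.mp hu with rfl | hu <;>
      rcases Finset.mem_insert.mp hv with hv' | hv
    · exact absurd hv'.symm huv
    · obtain ⟨D, hD, rfl⟩ := Finset.mem_image.mp hv
      refine Set.disjoint_left.mpr ?_
      rintro x ⟨hxX, hxC⟩ ⟨_, hxD⟩
      exact hxC (hTDC D hD hxD)
    · obtain ⟨D, hD, rfl⟩ := Finset.mem_image.mp hu
      subst hv'
      refine Set.disjoint_right.mpr ?_
      rintro x ⟨hxX, hxC⟩ ⟨_, hxD⟩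
      exact hxC (hTDC D hD hxD)
    · obtain ⟨D, hD, rfl⟩ := Finset.mem_image.mp hu
      obtain ⟨D', hD', rfl⟩ := Finset.mem_image.mp hv
      have hne : D ≠ D' := fun hh => huv (by rw [hh])
      exact (hTDdisj hD hD' hne).mono Set.inter_subset_right Set.inter_subset_right
  · rw [Set.diff_diff_right]
    ext x
    simp only [Finset.coe_insert, Set.sUnion_insert, Finset.coe_image, Set.sUnion_image,
      Set.mem_union, Set.mem_inter_iff, Set.mem_sUnion, Finset.mem_coe, Set.mem_iUnion,
      Set.mem_diff]
    tauto

/-- disjoint union of two ddd sets is ddd. -/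
lemma ddd_union_disjoint {X Y : Set Ω} (hX : DDD 𝒟 X) (hY : DDD 𝒟 Y)
    (hXY : Disjoint X Y) : DDD 𝒟 (X ∪ Y) := by
  classical
  obtain ⟨T1, hT1dd, hT1disj, rfl⟩ := hX
  obtain ⟨T2, hT2dd, hT2disj, rfl⟩ := hY
  refine ⟨T1 ∪ T2, ?_, ?_, ?_⟩
  · intro C hC
    rcases Finset.mem_union.mp hC with hC | hC
    exacts [hT1dd C hC, hT2dd C hC]
  · intro u hu v hv huv
    have hsub1 : ∀ t ∈ T1, t ⊆ ⋃₀ (↑T1 : Set (Set Ω)) := fun t ht x hx => ⟨t, ht, hx⟩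
    have hsub2 : ∀ t ∈ T2, t ⊆ ⋃₀ (↑T2 : Set (Set Ω)) := fun t ht x hx => ⟨t, ht, hx⟩
    rcases Finset.mem_union.mp hu with hu' | hu' <;>
      rcases Finset.mem_union.mp hv with hv' | hv'
    · exact hT1disj hu' hv' huv
    · exact hXY.mono (hsub1 u hu') (hsub2 v hv')
    · exact (hXY.mono (hsub1 v hv') (hsub2 u hu')).symm
    · exact hT2disj hu' hv' huv
  · rw [Finset.coe_union, Set.sUnion_union]

/-- ddd minus dd is ddd. -/
lemma ddd_diff_dd (h : IsDClass 𝒟) {Z W : Set Ω} (hZ : DDD 𝒟 Z) (hW : DD 𝒟 W) :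
    DDD 𝒟 (Z \ W) := by
  classical
  obtain ⟨T, hTdd, hTdisj, rfl⟩ := hZ
  induction T using Finset.induction_on with
  | empty => simpa using ddd_empty
  | @insert C T hCT ih =>
    rw [Finset.coe_insert, Set.sUnion_insert, Set.union_diff_distrib]
    have hpair : (↑T : Set (Set Ω)).Pairwise Disjoint :=
      hTdisj.mono (by rw [Finset.coe_insert]; exact Set.subset_insert _ _)
    refine ddd_union_disjoint (dd_diff h (hTdd C (Finset.mem_insert_self _ _)) hW)
      (ih (fun c hc => hTdd c (Finset.mem_insert_of_mem hc)) hpair) ?_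
    have hCd : Disjoint C (⋃₀ (↑T : Set (Set Ω))) := by
      refine Set.disjoint_sUnion_right.mpr ?_
      intro t ht
      refine hTdisj (Finset.mem_coe.mpr (Finset.mem_insert_self _ _))
        (Finset.mem_coe.mpr (Finset.mem_insert_of_mem ht)) ?_
      rintro rfl
      exact hCT ht
    exact hCd.mono Set.diff_subset Set.diff_subset

/-- ddd minus ddd is ddd. -/
lemma ddd_diff (h : IsDClass 𝒟) {X Y : Set Ω} (hX : DDD 𝒟 X) (hY : DDD 𝒟 Y) :
    DDD 𝒟 (X \ Y) := by
  classical
  obtain ⟨T, hTdd, -, rfl⟩ := hY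
  induction T using Finset.induction_on with
  | empty => simpa using hX
  | @insert W T hWT ih =>
    rw [Finset.coe_insert, Set.sUnion_insert]
    have : X \ (W ∪ ⋃₀ (↑T : Set (Set Ω))) = (X \ ⋃₀ (↑T : Set (Set Ω))) \ W := by
      rw [Set.diff_diff, Set.union_comm]
    rw [this]
    exact ddd_diff_dd h (ih (fun c hc => hTdd c (Finset.mem_insert_of_mem hc)))
      (hTdd W (Finset.mem_insert_self _ _))

lemma ddd_union (h : IsDClass 𝒟) {X Y : Set Ω} (hX : DDD 𝒟 X) (hY : DDD 𝒟 Y) :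
    DDD 𝒟 (X ∪ Y) := by
  rw [← Set.diff_union_self]
  exact ddd_union_disjoint (ddd_diff h hX hY) hY disjoint_sdiff_self_left

lemma ddd_mem_ring (h𝒟 : IsDClass 𝒟) {R : Set (Set Ω)} (hR : IsSetRing R) (hsub : 𝒟 ⊆ R)
    {X : Set Ω} (hX : DDD 𝒟 X) : X ∈ R := by
  classical
  have hdd_mem : ∀ W : Set Ω, DD 𝒟 W → W ∈ R := by
    rintro W ⟨A, hA, TB, hTBD, -, -, rfl⟩
    induction TB using Finset.induction_on with
    | empty => simpa using hsub hA
    | @insert B T hBT ih =>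
      rw [Finset.coe_insert, Set.sUnion_insert]
      have : A \ (B ∪ ⋃₀ (↑T : Set (Set Ω))) = (A \ ⋃₀ (↑T : Set (Set Ω))) \ B := by
        rw [Set.diff_diff, Set.union_comm]
      rw [this]
      exact hR.1 _ (ih (fun c hc => hTBD c (Finset.mem_insert_of_mem hc))) B
        (hsub (hTBD B (Finset.mem_insert_self _ _)))
  obtain ⟨T, hTdd, -, rfl⟩ := hX
  induction T using Finset.induction_on with
  | empty => simpa using hsub h𝒟.1
  | @insert C T hCT ih =>
    rw [Finset.coe_insert, Set.sUnion_insert]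
    exact hR.2 _ (hdd_mem C (hTdd C (Finset.mem_insert_self _ _))) _
      (ih (fun c hc => hTdd c (Finset.mem_insert_of_mem hc)))

end S19

/-- For a d-class `𝒟`, the collection of all ddd sets is a ring of sets
(closed under differences and unions), contains `𝒟`, and is the smallest ring of sets
containing `𝒟`. -/
theorem statement19 {Ω : Type*} (𝒟 : Set (Set Ω)) (h𝒟 : IsDClass 𝒟) :
    IsSetRing {X : Set Ω | IsDDD 𝒟 X} ∧
    𝒟 ⊆ {X : Set Ω | IsDDD 𝒟 X} ∧
    (∀ R : Set (Set Ω), IsSetRing R → 𝒟 ⊆ R → {X : Set Ω | IsDDD 𝒟 X} ⊆ R) := by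
  refine ⟨⟨?_, ?_⟩, ?_, ?_⟩
  · intro A hA B hB
    simp only [Set.mem_setOf_eq, S19.isDDD_iff] at *
    exact S19.ddd_diff h𝒟 hA hB
  · intro A hA B hB
    simp only [Set.mem_setOf_eq, S19.isDDD_iff] at *
    exact S19.ddd_union h𝒟 hA hB
  · intro A hA
    simp only [Set.mem_setOf_eq, S19.isDDD_iff]
    exact S19.dd_ddd ⟨A, hA, ∅, by simp, by simp, by simp, by simp⟩
  · intro R hR hsub X hX
    simp only [Set.mem_setOf_eq, S19.isDDD_iff] at hX
    exact S19.ddd_mem_ring h𝒟 hR hsub hX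
end
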